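/- arXiv:math/9901096 — 5 statements merged into one kernel-verified Lean document; each statement's English description precedes it below -/
import Mathlib

section
/- Let Ξ be a finitely additive probability measure on a Boolean subalgebra P of P(ω) containing all finite sets, with Ξ(∅)=0, Ξ(ω)=1, and Ξ({n})=0 for all n. Let X ⊆ ω with X ∉ P, and let a ∈ [0,1] satisfy sup{Ξ(A) : A ⊆ X, A ∈ P} ≤ a ≤ inf{Ξ(B) : B ⊇ X, B ∈ P}. Then there exists a finitely additive probability measure Ξ* on all of P(ω) extending Ξ with Ξ*(X) = a. -/
open Set

def IsPM (D : Set (Set ℕ)) (ν : Set ℕ → ℝ) : Prop :=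
  Set.univ ∈ D ∧ (∀ A ∈ D, Aᶜ ∈ D) ∧ (∀ A ∈ D, ∀ B ∈ D, A ∪ B ∈ D) ∧
  (∀ A ∈ D, 0 ≤ ν A) ∧ ν Set.univ = 1 ∧
  (∀ A ∈ D, ∀ B ∈ D, Disjoint A B → ν (A ∪ B) = ν A + ν B)

namespace IsPM
variable {D : Set (Set ℕ)} {ν : Set ℕ → ℝ} {A B : Set ℕ}

lemma univ_mem (h : IsPM D ν) : Set.univ ∈ D := h.1
lemma compl_mem (h : IsPM D ν) (hA : A ∈ D) : Aᶜ ∈ D := h.2.1 A hA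
lemma union_mem (h : IsPM D ν) (hA : A ∈ D) (hB : B ∈ D) : A ∪ B ∈ D := h.2.2.1 A hA B hB
lemma nonneg (h : IsPM D ν) (hA : A ∈ D) : 0 ≤ ν A := h.2.2.2.1 A hA
lemma nu_univ (h : IsPM D ν) : ν Set.univ = 1 := h.2.2.2.2.1
lemma add (h : IsPM D ν) (hA : A ∈ D) (hB : B ∈ D) (hd : Disjoint A B) :
    ν (A ∪ B) = ν A + ν B := h.2.2.2.2.2 A hA B hB hd

lemma inter_mem (h : IsPM D ν) (hA : A ∈ D) (hB : B ∈ D) : A ∩ B ∈ D := by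
  rw [show A ∩ B = (Aᶜ ∪ Bᶜ)ᶜ by simp]
  exact h.compl_mem (h.union_mem (h.compl_mem hA) (h.compl_mem hB))

lemma empty_mem (h : IsPM D ν) : (∅ : Set ℕ) ∈ D := by
  simpa using h.compl_mem h.univ_mem

lemma diff_mem (h : IsPM D ν) (hA : A ∈ D) (hB : B ∈ D) : A \ B ∈ D :=
  h.inter_mem hA (h.compl_mem hB)

lemma nu_empty (h : IsPM D ν) : ν ∅ = 0 := by
  have := h.add h.univ_mem h.empty_mem (by simp)
  simp only [Set.union_empty] at this
  linarith

lemma mono (h : IsPM D ν) (hA : A ∈ D) (hB : B ∈ D) (hAB : A ⊆ B) : ν A ≤ ν B := by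
  have hd : Disjoint A (B \ A) := disjoint_sdiff_self_right
  have hu : A ∪ (B \ A) = B := Set.union_diff_cancel hAB
  have := h.add hA (h.diff_mem hB hA) hd
  rw [hu] at this
  have := h.nonneg (h.diff_mem hB hA)
  linarith

lemma le_one (h : IsPM D ν) (hA : A ∈ D) : ν A ≤ 1 := by
  have := h.mono hA h.univ_mem (Set.subset_univ A)
  rwa [h.nu_univ] at this

lemma subadd (h : IsPM D ν) (hA : A ∈ D) (hB : B ∈ D) : ν (A ∪ B) ≤ ν A + ν B := by
  have hu : A ∪ (B \ A) = A ∪ B := by simp [Set.union_diff_self]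
  have := h.add hA (h.diff_mem hB hA) disjoint_sdiff_self_right
  rw [hu] at this
  have := h.mono (h.diff_mem hB hA) hB Set.diff_subset
  linarith

end IsPM

noncomputable def out (D : Set (Set ℕ)) (ν : Set ℕ → ℝ) (E : Set ℕ) : ℝ :=
  sInf (ν '' {C | C ∈ D ∧ E ⊆ C})

noncomputable def inn (D : Set (Set ℕ)) (ν : Set ℕ → ℝ) (E : Set ℕ) : ℝ :=
  sSup (ν '' {C | C ∈ D ∧ C ⊆ E})

namespace IsPM
variable {D : Set (Set ℕ)} {ν : Set ℕ → ℝ} {A B C E F S Y : Set ℕ}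

lemma out_set_nonempty (h : IsPM D ν) (E : Set ℕ) : (ν '' {C | C ∈ D ∧ E ⊆ C}).Nonempty :=
  ⟨ν Set.univ, Set.univ, ⟨h.univ_mem, Set.subset_univ E⟩, rfl⟩

lemma out_set_bdd (h : IsPM D ν) (E : Set ℕ) : BddBelow (ν '' {C | C ∈ D ∧ E ⊆ C}) := by
  refine ⟨0, ?_⟩
  rintro r ⟨C, ⟨hC, -⟩, rfl⟩
  exact h.nonneg hC

lemma inn_set_nonempty (h : IsPM D ν) (E : Set ℕ) : (ν '' {C | C ∈ D ∧ C ⊆ E}).Nonempty :=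
  ⟨ν ∅, ∅, ⟨h.empty_mem, Set.empty_subset E⟩, rfl⟩

lemma inn_set_bdd (h : IsPM D ν) (E : Set ℕ) : BddAbove (ν '' {C | C ∈ D ∧ C ⊆ E}) := by
  refine ⟨1, ?_⟩
  rintro r ⟨C, ⟨hC, -⟩, rfl⟩
  exact h.le_one hC

lemma out_le (h : IsPM D ν) (hC : C ∈ D) (hE : E ⊆ C) : out D ν E ≤ ν C :=
  csInf_le (h.out_set_bdd E) ⟨C, ⟨hC, hE⟩, rfl⟩

lemma le_out (h : IsPM D ν) {r : ℝ} (hr : ∀ C ∈ D, E ⊆ C → r ≤ ν C) : r ≤ out D ν E := by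
  refine le_csInf (h.out_set_nonempty E) ?_
  rintro s ⟨C, ⟨hC, hE⟩, rfl⟩
  exact hr C hC hE

lemma le_inn (h : IsPM D ν) (hC : C ∈ D) (hE : C ⊆ E) : ν C ≤ inn D ν E :=
  le_csSup (h.inn_set_bdd E) ⟨C, ⟨hC, hE⟩, rfl⟩

lemma inn_le (h : IsPM D ν) {r : ℝ} (hr : ∀ C ∈ D, C ⊆ E → ν C ≤ r) : inn D ν E ≤ r := by
  refine csSup_le (h.inn_set_nonempty E) ?_
  rintro s ⟨C, ⟨hC, hE⟩, rfl⟩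
  exact hr C hC hE

lemma out_nonneg (h : IsPM D ν) (E : Set ℕ) : 0 ≤ out D ν E :=
  h.le_out fun C hC _ => h.nonneg hC

lemma inn_nonneg (h : IsPM D ν) (E : Set ℕ) : 0 ≤ inn D ν E := by
  have := h.le_inn h.empty_mem (Set.empty_subset E)
  rwa [h.nu_empty] at this

lemma out_empty (h : IsPM D ν) : out D ν ∅ = 0 := by
  have h1 : out D ν ∅ ≤ 0 := by
    have := h.out_le h.empty_mem (Set.Subset.refl ∅)
    rwa [h.nu_empty] at this
  linarith [h.out_nonneg (∅ : Set ℕ)]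

lemma inn_empty (h : IsPM D ν) : inn D ν ∅ = 0 := by
  have h1 : inn D ν ∅ ≤ 0 := h.inn_le fun C hC hCE => by
    rw [Set.subset_empty_iff] at hCE; subst hCE; rw [h.nu_empty]
  linarith [h.inn_nonneg (∅ : Set ℕ)]

lemma out_cut (h : IsPM D ν) (hS : S ∈ D) (E : Set ℕ) :
    out D ν E = out D ν (E ∩ S) + out D ν (E \ S) := by
  apply le_antisymm
  · -- out E ≤ out (E∩S) + out (E∖S)
    have : ∀ C₁ ∈ D, E ∩ S ⊆ C₁ → out D ν E - out D ν (E \ S) ≤ ν C₁ := by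
      intro C₁ hC₁ hE₁
      have : out D ν E - ν C₁ ≤ out D ν (E \ S) := by
        apply h.le_out
        intro C₂ hC₂ hE₂
        have hsub : E ⊆ C₁ ∪ C₂ := by
          intro x hx
          by_cases hxS : x ∈ S
          · exact Or.inl (hE₁ ⟨hx, hxS⟩)
          · exact Or.inr (hE₂ ⟨hx, hxS⟩)
        have h1 := h.out_le (h.union_mem hC₁ hC₂) hsub
        have h2 := h.subadd hC₁ hC₂
        linarith
      linarith
    have := h.le_out (E := E ∩ S) this
    linarith
  · apply h.le_out
    intro C hC hE
    have h1 := h.out_le (E := E ∩ S) (h.inter_mem hC hS) (Set.inter_subset_inter_left S hE)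
    have h2 := h.out_le (E := E \ S) (h.diff_mem hC hS) (Set.diff_subset_diff_left hE)
    have h3 : ν (C ∩ S) + ν (C \ S) = ν C := by
      have := h.add (h.inter_mem hC hS) (h.diff_mem hC hS)
        (Disjoint.mono_left Set.inter_subset_right disjoint_sdiff_right)
      rw [Set.inter_union_diff] at this
      linarith
    linarith

lemma inn_cut (h : IsPM D ν) (hS : S ∈ D) (E : Set ℕ) :
    inn D ν E = inn D ν (E ∩ S) + inn D ν (E \ S) := by
  apply le_antisymm
  · apply h.inn_le
    intro C hC hE
    have h1 := h.le_inn (E := E ∩ S) (h.inter_mem hC hS) (Set.inter_subset_inter_left S hE)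
    have h2 := h.le_inn (E := E \ S) (h.diff_mem hC hS) (Set.diff_subset_diff_left hE)
    have h3 : ν (C ∩ S) + ν (C \ S) = ν C := by
      have := h.add (h.inter_mem hC hS) (h.diff_mem hC hS)
        (Disjoint.mono_left Set.inter_subset_right disjoint_sdiff_right)
      rw [Set.inter_union_diff] at this
      linarith
    linarith
  · have : ∀ C₁ ∈ D, C₁ ⊆ E ∩ S → ν C₁ ≤ inn D ν E - inn D ν (E \ S) := by
      intro C₁ hC₁ hE₁
      have : inn D ν (E \ S) ≤ inn D ν E - ν C₁ := by
        apply h.inn_le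
        intro C₂ hC₂ hE₂
        have hd : Disjoint C₁ C₂ := by
          refine Set.disjoint_left.2 fun x hx1 hx2 => ?_
          exact (hE₂ hx2).2 (hE₁ hx1).2
        have hsub : C₁ ∪ C₂ ⊆ E :=
          Set.union_subset (hE₁.trans Set.inter_subset_left) (hE₂.trans Set.diff_subset)
        have h1 := h.le_inn (h.union_mem hC₁ hC₂) hsub
        have h2 := h.add hC₁ hC₂ hd
        linarith
      linarith
    have := h.inn_le (E := E ∩ S) this
    linarith

lemma out_inn_extend (h : IsPM D ν) (hA : A ∈ D) (Y : Set ℕ) :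
    out D ν (A ∩ Y) + inn D ν (A \ Y) = ν A := by
  apply le_antisymm
  · have : ∀ C ∈ D, C ⊆ A \ Y → ν C ≤ ν A - out D ν (A ∩ Y) := by
      intro C hC hCE
      have hmem : A \ C ∈ D := h.diff_mem hA hC
      have hsub : A ∩ Y ⊆ A \ C := by
        rintro x ⟨hxA, hxY⟩
        exact ⟨hxA, fun hxC => (hCE hxC).2 hxY⟩
      have h1 := h.out_le hmem hsub
      have h2 : ν C + ν (A \ C) = ν A := by
        have := h.add hC hmem disjoint_sdiff_right
        rw [Set.union_diff_cancel' (le_refl C) (hCE.trans Set.diff_subset)] at this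
        linarith
      linarith
    have := h.inn_le (E := A \ Y) this
    linarith
  · have : ∀ C ∈ D, A ∩ Y ⊆ C → ν A - inn D ν (A \ Y) ≤ ν C := by
      intro C hC hCE
      have h1 := h.le_inn (E := A \ Y) (h.diff_mem hA hC) (by
        rintro x ⟨hxA, hxC⟩
        exact ⟨hxA, fun hxY => hxC (hCE ⟨hxA, hxY⟩)⟩)
      have h2 : ν (A ∩ C) + ν (A \ C) = ν A := by
        have := h.add (h.inter_mem hA hC) (h.diff_mem hA hC)
          (Disjoint.mono_left Set.inter_subset_right disjoint_sdiff_right)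
        rw [Set.inter_union_diff] at this
        linarith
      have h3 := h.mono (h.inter_mem hA hC) hC Set.inter_subset_right
      linarith
    have := h.le_out (E := A ∩ Y) this
    linarith

end IsPM

def Dext (D : Set (Set ℕ)) (Y : Set ℕ) : Set (Set ℕ) :=
  {E | ∃ A ∈ D, ∃ B ∈ D, E = (A ∩ Y) ∪ (B \ Y)}

noncomputable def νext (D : Set (Set ℕ)) (ν : Set ℕ → ℝ) (Y : Set ℕ) (E : Set ℕ) : ℝ :=
  out D ν (E ∩ Y) + inn D ν (E \ Y)

namespace IsPM
variable {D : Set (Set ℕ)} {ν : Set ℕ → ℝ} {A B E F Y : Set ℕ}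

lemma subset_Dext (hA : A ∈ D) : A ∈ Dext D Y :=
  ⟨A, hA, A, hA, by ext x; by_cases hx : x ∈ Y <;> simp [hx]⟩

lemma mem_Dext_self (h : IsPM D ν) : Y ∈ Dext D Y :=
  ⟨Set.univ, h.univ_mem, ∅, h.empty_mem, by ext x; by_cases hx : x ∈ Y <;> simp [hx]⟩

lemma νext_eq (h : IsPM D ν) (hA : A ∈ D) : νext D ν Y A = ν A :=
  h.out_inn_extend hA Y

lemma νext_self (h : IsPM D ν) : νext D ν Y Y = out D ν Y := by
  simp [νext, Set.inter_self, Set.diff_self, h.inn_empty]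

lemma νext_compl_self (h : IsPM D ν) : νext D ν Y Yᶜ = inn D ν Yᶜ := by
  have h1 : Yᶜ ∩ Y = ∅ := by simp [Set.inter_comm]
  have h2 : Yᶜ \ Y = Yᶜ := by ext x; simp
  simp [νext, h1, h2, h.out_empty]

lemma isPM_ext (h : IsPM D ν) (Y : Set ℕ) : IsPM (Dext D Y) (νext D ν Y) := by
  have keyInter : ∀ A ∈ D, ∀ B ∈ D, ((A ∩ Y) ∪ (B \ Y)) ∩ Y = A ∩ Y := by
    intro A hA B hB; ext x; by_cases hx : x ∈ Y <;> simp [hx]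
  have keyDiff : ∀ A ∈ D, ∀ B ∈ D, ((A ∩ Y) ∪ (B \ Y)) \ Y = B \ Y := by
    intro A hA B hB; ext x; by_cases hx : x ∈ Y <;> simp [hx]
  refine ⟨subset_Dext h.univ_mem, ?_, ?_, ?_, ?_, ?_⟩
  · rintro E ⟨A, hA, B, hB, rfl⟩
    refine ⟨Aᶜ, h.compl_mem hA, Bᶜ, h.compl_mem hB, ?_⟩
    ext x; by_cases hx : x ∈ Y <;> simp [hx]
  · rintro E ⟨A1, hA1, B1, hB1, rfl⟩ F ⟨A2, hA2, B2, hB2, rfl⟩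
    refine ⟨A1 ∪ A2, h.union_mem hA1 hA2, B1 ∪ B2, h.union_mem hB1 hB2, ?_⟩
    ext x; by_cases hx : x ∈ Y <;> simp [hx] <;> try tauto
  · intro E _
    exact add_nonneg (h.out_nonneg _) (h.inn_nonneg _)
  · rw [νext_eq h h.univ_mem, h.nu_univ]
  · rintro E ⟨A1, hA1, B1, hB1, rfl⟩ F ⟨A2, hA2, B2, hB2, rfl⟩ hd
    set E := (A1 ∩ Y) ∪ (B1 \ Y) with hE
    set F := (A2 ∩ Y) ∪ (B2 \ Y) with hF
    have hEY : E ∩ Y = A1 ∩ Y := keyInter A1 hA1 B1 hB1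
    have hFY : F ∩ Y = A2 ∩ Y := keyInter A2 hA2 B2 hB2
    have hEd : E \ Y = B1 \ Y := keyDiff A1 hA1 B1 hB1
    have hFd : F \ Y = B2 \ Y := keyDiff A2 hA2 B2 hB2
    have hdY : Disjoint (A1 ∩ Y) (A2 ∩ Y) := by
      rw [← hEY, ← hFY]
      exact hd.mono Set.inter_subset_left Set.inter_subset_left
    have hdd : Disjoint (B1 \ Y) (B2 \ Y) := by
      rw [← hEd, ← hFd]
      exact hd.mono Set.diff_subset Set.diff_subset
    have hUY : (E ∪ F) ∩ Y = (A1 ∪ A2) ∩ Y := by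
      rw [Set.union_inter_distrib_right, hEY, hFY, ← Set.union_inter_distrib_right]
    have hUd : (E ∪ F) \ Y = (B1 ∪ B2) \ Y := by
      rw [Set.union_diff_distrib, hEd, hFd, ← Set.union_diff_distrib]
    have houtadd : out D ν ((A1 ∪ A2) ∩ Y) = out D ν (A1 ∩ Y) + out D ν (A2 ∩ Y) := by
      have hc := h.out_cut hA1 ((A1 ∪ A2) ∩ Y)
      have e1 : ((A1 ∪ A2) ∩ Y) ∩ A1 = A1 ∩ Y := by
        ext x; simp; tauto
      have e2 : ((A1 ∪ A2) ∩ Y) \ A1 = A2 ∩ Y := by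
        ext x
        simp only [Set.mem_diff, Set.mem_inter_iff, Set.mem_union]
        constructor
        · rintro ⟨⟨h1 | h1, h2⟩, h3⟩
          · exact absurd h1 h3
          · exact ⟨h1, h2⟩
        · rintro ⟨h1, h2⟩
          refine ⟨⟨Or.inr h1, h2⟩, fun hx => ?_⟩
          exact (Set.disjoint_left.1 hdY ⟨hx, h2⟩) ⟨h1, h2⟩
      rw [e1, e2] at hc
      exact hc
    have hinnadd : inn D ν ((B1 ∪ B2) \ Y) = inn D ν (B1 \ Y) + inn D ν (B2 \ Y) := by
      have hc := h.inn_cut hB1 ((B1 ∪ B2) \ Y)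
      have e1 : ((B1 ∪ B2) \ Y) ∩ B1 = B1 \ Y := by
        ext x; simp; tauto
      have e2 : ((B1 ∪ B2) \ Y) \ B1 = B2 \ Y := by
        ext x
        simp only [Set.mem_diff, Set.mem_union]
        constructor
        · rintro ⟨⟨h1 | h1, h2⟩, h3⟩
          · exact absurd h1 h3
          · exact ⟨h1, h2⟩
        · rintro ⟨h1, h2⟩
          refine ⟨⟨Or.inr h1, h2⟩, fun hx => ?_⟩
          exact (Set.disjoint_left.1 hdd ⟨hx, h2⟩) ⟨h1, h2⟩
      rw [e1, e2] at hc
      exact hc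
    show out D ν ((E ∪ F) ∩ Y) + inn D ν ((E ∪ F) \ Y) = _
    rw [hUY, hUd, houtadd, hinnadd]
    show _ = (out D ν (E ∩ Y) + inn D ν (E \ Y)) + (out D ν (F ∩ Y) + inn D ν (F \ Y))
    rw [hEY, hFY, hEd, hFd]
    ring

end IsPM

lemma Dext_compl (D : Set (Set ℕ)) (Y : Set ℕ) : Dext D Yᶜ = Dext D Y := by
  have key : ∀ (A B : Set ℕ), (A ∩ Yᶜ) ∪ (B \ Yᶜ) = (B ∩ Y) ∪ (A \ Y) := by
    intro A B
    ext x; by_cases hx : x ∈ Y <;> simp [hx]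
  ext E
  constructor
  · rintro ⟨A, hA, B, hB, rfl⟩
    exact ⟨B, hB, A, hA, key A B⟩
  · rintro ⟨A, hA, B, hB, rfl⟩
    exact ⟨B, hB, A, hA, (key B A).symm ▸ (key B A)⟩

lemma isPM_combo {D : Set (Set ℕ)} {f g : Set ℕ → ℝ} {l : ℝ}
    (hf : IsPM D f) (hg : IsPM D g) (hl0 : 0 ≤ l) (hl1 : l ≤ 1) :
    IsPM D (fun E => l * f E + (1 - l) * g E) := by
  refine ⟨hf.univ_mem, fun A hA => hf.compl_mem hA, fun A hA B hB => hf.union_mem hA hB, ?_, ?_, ?_⟩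
  · intro A hA
    have h1 := hf.nonneg hA
    have h2 := hg.nonneg hA
    have : (0:ℝ) ≤ l * f A + (1 - l) * g A := by nlinarith
    simpa using this
  · simp only [hf.nu_univ, hg.nu_univ]; ring
  · intro A hA B hB hd
    simp only [hf.add hA hB hd, hg.add hA hB hd]; ring

/-- Hahn–Banach extension of finitely additive measures: a partial finitely additive
probability measure `Ξ` on a Boolean subalgebra `P` of `𝒫(ω)` containing the finite sets
extends to a full finitely additive probability measure `Ξ*` with a prescribed value
`Ξ* X = a` at any `X ∉ P`, as long as `a` lies between the corresponding sup and inf. -/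
theorem stmt3 (P : Set (Set ℕ))
    (hPfin : ∀ A : Set ℕ, A.Finite → A ∈ P)
    (hPcompl : ∀ A ∈ P, Aᶜ ∈ P)
    (hPunion : ∀ A ∈ P, ∀ B ∈ P, A ∪ B ∈ P)
    (Ξ : Set ℕ → ℝ)
    (hrange : ∀ A ∈ P, Ξ A ∈ Set.Icc (0 : ℝ) 1)
    (h0 : Ξ ∅ = 0) (h1 : Ξ Set.univ = 1)
    (hadd : ∀ A ∈ P, ∀ B ∈ P, Disjoint A B → Ξ (A ∪ B) = Ξ A + Ξ B)
    (hsing : ∀ n : ℕ, Ξ {n} = 0)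
    (X : Set ℕ) (hX : X ∉ P) (a : ℝ)
    (ha1 : ∀ A ∈ P, A ⊆ X → Ξ A ≤ a)
    (ha2 : ∀ B ∈ P, X ⊆ B → a ≤ Ξ B) :
    ∃ Ξs : Set ℕ → ℝ,
      (∀ A ∈ P, Ξs A = Ξ A) ∧
      Ξs X = a ∧
      (∀ A : Set ℕ, Ξs A ∈ Set.Icc (0 : ℝ) 1) ∧
      Ξs ∅ = 0 ∧ Ξs Set.univ = 1 ∧
      (∀ A B : Set ℕ, Disjoint A B → Ξs (A ∪ B) = Ξs A + Ξs B) ∧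
      (∀ n : ℕ, Ξs {n} = 0) := by
  classical
  -- the base partial measure
  have hP : IsPM P Ξ := by
    refine ⟨?_, hPcompl, hPunion, fun A hA => (hrange A hA).1, h1, hadd⟩
    have := hPcompl ∅ (hPfin ∅ Set.finite_empty)
    simpa using this
  -- bounds
  have hia : inn P Ξ X ≤ a := hP.inn_le fun C hC hCX => ha1 C hC hCX
  have hao : a ≤ out P Ξ X := hP.le_out fun C hC hXC => ha2 C hC hXC
  have hio : inn P Ξ X ≤ out P Ξ X := le_trans hia hao
  -- the first-step extension hitting value a at X
  set l : ℝ := if out P Ξ X = inn P Ξ X then 1 else (a - inn P Ξ X) / (out P Ξ X - inn P Ξ X) with hl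
  have hl0 : 0 ≤ l := by
    rw [hl]
    split
    · norm_num
    · next hne =>
      have : inn P Ξ X < out P Ξ X := lt_of_le_of_ne hio (Ne.symm hne)
      apply div_nonneg <;> linarith
  have hl1 : l ≤ 1 := by
    rw [hl]
    split
    · norm_num
    · next hne =>
      have : inn P Ξ X < out P Ξ X := lt_of_le_of_ne hio (Ne.symm hne)
      rw [div_le_one (by linarith)]
      linarith
  have hlval : l * out P Ξ X + (1 - l) * inn P Ξ X = a := by
    rw [hl]
    split
    · next heq =>
      have hout : a = out P Ξ X := le_antisymm hao (heq ▸ hia)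
      have hinn : a = inn P Ξ X := by rw [hout, heq]
      rw [← hout, ← hinn]; ring
    · next hne =>
      have key : (a - inn P Ξ X) / (out P Ξ X - inn P Ξ X) * (out P Ξ X - inn P Ξ X)
          = a - inn P Ξ X := div_mul_cancel₀ _ (sub_ne_zero.2 hne)
      linear_combination key
  set ν1 : Set ℕ → ℝ := fun E => l * νext P Ξ X E + (1 - l) * νext P Ξ Xᶜ E with hν1
  have hPM1 : IsPM (Dext P X) ν1 := by
    apply isPM_combo (hP.isPM_ext X) _ hl0 hl1
    rw [← Dext_compl P X]
    exact hP.isPM_ext Xᶜ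
  have hν1X : ν1 X = a := by
    have e1 : νext P Ξ X X = out P Ξ X := hP.νext_self
    have e2 : νext P Ξ Xᶜ X = inn P Ξ X := by
      have := hP.νext_compl_self (Y := Xᶜ)
      rwa [compl_compl] at this
    rw [hν1]; simp only; rw [e1, e2, hlval]
  have hν1P : ∀ A ∈ P, ν1 A = Ξ A := by
    intro A hA
    rw [hν1]; simp only [hP.νext_eq hA]; ring
  -- Zorn's lemma on graphs of extensions
  set 𝒞 : Set (Set (Set ℕ × ℝ)) :=
    {G | ∃ D ν, IsPM D ν ∧ P ⊆ D ∧ (∀ A ∈ P, ν A = Ξ A) ∧ X ∈ D ∧ ν X = a ∧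
      G = {p | p.1 ∈ D ∧ p.2 = ν p.1}} with h𝒞
  have hG1 : {p : Set ℕ × ℝ | p.1 ∈ Dext P X ∧ p.2 = ν1 p.1} ∈ 𝒞 :=
    ⟨Dext P X, ν1, hPM1, fun A hA => IsPM.subset_Dext hA, hν1P, hP.mem_Dext_self, hν1X, rfl⟩
  have hchain : ∀ c ⊆ 𝒞, IsChain (· ⊆ ·) c → c.Nonempty →
      ∃ ub ∈ 𝒞, ∀ s ∈ c, s ⊆ ub := by
    intro c hc hchain ⟨G0, hG0⟩
    set U := ⋃₀ c with hU
    set DU : Set (Set ℕ) := {A | ∃ r, (A, r) ∈ U} with hDU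
    set νU : Set ℕ → ℝ := fun A => if h : ∃ r, (A, r) ∈ U then h.choose else 0 with hνU
    -- functionality
    have hfun : ∀ {A : Set ℕ} {r : ℝ}, (A, r) ∈ U → νU A = r := by
      intro A r hAr
      have hex : ∃ r', (A, r') ∈ U := ⟨r, hAr⟩
      have hspec := hex.choose_spec
      rw [hνU]; simp only [dif_pos hex]
      -- both (A, hex.choose) and (A, r) in U; use chain
      obtain ⟨G, hGc, hAG⟩ := hspec
      obtain ⟨G', hG'c, hAG'⟩ := hAr
      rcases eq_or_ne G G' with rfl | hne
      · obtain ⟨D, ν, _, _, _, _, _, rfl⟩ := hc hGc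
        exact hAG.2.trans hAG'.2.symm
      · rcases hchain hGc hG'c hne with hsub | hsub
        · obtain ⟨D, ν, _, _, _, _, _, rfl⟩ := hc hG'c
          exact (hsub hAG).2.trans hAG'.2.symm
        · obtain ⟨D, ν, _, _, _, _, _, rfl⟩ := hc hGc
          exact hAG.2.trans (hsub hAG').2.symm
    -- membership in a common graph
    have hcommon : ∀ {A B : Set ℕ}, A ∈ DU → B ∈ DU →
        ∃ G ∈ c, ∃ D ν, IsPM D ν ∧ P ⊆ D ∧ (∀ A' ∈ P, ν A' = Ξ A') ∧ X ∈ D ∧ ν X = a ∧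
          G = {p : Set ℕ × ℝ | p.1 ∈ D ∧ p.2 = ν p.1} ∧ A ∈ D ∧ B ∈ D := by
      rintro A B ⟨r, G, hGc, hAG⟩ ⟨s, G', hG'c, hBG'⟩
      rcases eq_or_ne G G' with rfl | hne
      · obtain ⟨D, ν, h1, h2, h3, h4, h5, rfl⟩ := hc hGc
        exact ⟨_, hGc, D, ν, h1, h2, h3, h4, h5, rfl, hAG.1, hBG'.1⟩
      · rcases hchain hGc hG'c hne with hsub | hsub
        · obtain ⟨D, ν, h1, h2, h3, h4, h5, rfl⟩ := hc hG'c
          exact ⟨_, hG'c, D, ν, h1, h2, h3, h4, h5, rfl, (hsub hAG).1, hBG'.1⟩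
        · obtain ⟨D, ν, h1, h2, h3, h4, h5, rfl⟩ := hc hGc
          exact ⟨_, hGc, D, ν, h1, h2, h3, h4, h5, rfl, hAG.1, (hsub hBG').1⟩
    obtain ⟨D0, ν0, hPM0, hPD0, hν0P, hXD0, hν0X, hG0eq⟩ := hc hG0
    have hG0U : G0 ⊆ U := Set.subset_sUnion_of_mem hG0
    have hmemU : ∀ {D : Set (Set ℕ)} {ν : Set ℕ → ℝ} {G : Set (Set ℕ × ℝ)}, G ∈ c → G = {p : Set ℕ × ℝ | p.1 ∈ D ∧ p.2 = ν p.1} →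
        ∀ {A}, A ∈ D → A ∈ DU ∧ νU A = ν A := by
      intro D ν G hGc hGeq A hA
      have : (A, ν A) ∈ U := ⟨G, hGc, hGeq ▸ ⟨hA, rfl⟩⟩
      exact ⟨⟨ν A, this⟩, hfun this⟩
    refine ⟨U, ⟨DU, νU, ?_, ?_, ?_, ?_, ?_, ?_⟩, fun s hs => Set.subset_sUnion_of_mem hs⟩
    · -- IsPM DU νU
      refine ⟨?_, ?_, ?_, ?_, ?_, ?_⟩
      · exact (hmemU hG0 hG0eq hPM0.univ_mem).1
      · rintro A ⟨r, G, hGc, hAG⟩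
        obtain ⟨D, ν, h1, _, _, _, _, rfl⟩ := hc hGc
        exact (hmemU hGc rfl (h1.compl_mem hAG.1)).1
      · intro A hA B hB
        obtain ⟨G, hGc, D, ν, h1, _, _, _, _, rfl, hAD, hBD⟩ := hcommon hA hB
        exact (hmemU hGc rfl (h1.union_mem hAD hBD)).1
      · rintro A ⟨r, G, hGc, hAG⟩
        obtain ⟨D, ν, h1, _, _, _, _, rfl⟩ := hc hGc
        rw [(hmemU hGc rfl hAG.1).2]
        exact h1.nonneg hAG.1
      · rw [(hmemU hG0 hG0eq hPM0.univ_mem).2, hPM0.nu_univ]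
      · intro A hA B hB hd
        obtain ⟨G, hGc, D, ν, h1, _, _, _, _, rfl, hAD, hBD⟩ := hcommon hA hB
        rw [(hmemU hGc rfl (h1.union_mem hAD hBD)).2, (hmemU hGc rfl hAD).2,
          (hmemU hGc rfl hBD).2, h1.add hAD hBD hd]
    · intro A hA
      exact (hmemU hG0 hG0eq (hPD0 hA)).1
    · intro A hA
      rw [(hmemU hG0 hG0eq (hPD0 hA)).2, hν0P A hA]
    · exact (hmemU hG0 hG0eq hXD0).1
    · rw [(hmemU hG0 hG0eq hXD0).2, hν0X]
    · ext ⟨A, r⟩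
      constructor
      · rintro ⟨G, hGc, hAG⟩
        obtain ⟨D, ν, h1, _, _, _, _, rfl⟩ := hc hGc
        exact ⟨(hmemU hGc rfl hAG.1).1, ((hmemU hGc rfl hAG.1).2.trans hAG.2.symm).symm⟩
      · rintro ⟨⟨s, hs⟩, hr⟩
        have h2 : r = s := hr.trans (hfun hs)
        rw [h2]
        exact hs
  obtain ⟨M, -, hMmax⟩ := zorn_subset_nonempty 𝒞 hchain _ hG1
  obtain ⟨D, ν, hPM, hPD, hνP, hXD, hνX, hMeq⟩ := hMmax.1
  -- maximality: D is everything
  have hDall : ∀ Y : Set ℕ, Y ∈ D := by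
    intro Y
    by_contra hY
    set G' : Set (Set ℕ × ℝ) := {p | p.1 ∈ Dext D Y ∧ p.2 = νext D ν Y p.1} with hG'
    have hG'𝒞 : G' ∈ 𝒞 := by
      refine ⟨Dext D Y, νext D ν Y, hPM.isPM_ext Y, fun A hA => IsPM.subset_Dext (hPD hA),
        fun A hA => ?_, IsPM.subset_Dext hXD, ?_, rfl⟩
      · rw [hPM.νext_eq (hPD hA)]; exact hνP A hA
      · rw [hPM.νext_eq hXD]; exact hνX
    have hMG' : M ⊆ G' := by
      rw [hMeq]
      rintro ⟨A, r⟩ ⟨hAD, hr⟩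
      exact ⟨IsPM.subset_Dext hAD, hr.trans (hPM.νext_eq hAD).symm⟩
    have hG'M : G' ⊆ M := hMmax.2 hG'𝒞 hMG'
    have : (Y, νext D ν Y Y) ∈ M := hG'M ⟨hPM.mem_Dext_self, rfl⟩
    rw [hMeq] at this
    exact hY this.1
  refine ⟨ν, hνP, hνX, ?_, ?_, hPM.nu_univ, ?_, ?_⟩
  · intro A
    exact ⟨hPM.nonneg (hDall A), hPM.le_one (hDall A)⟩
  · exact hPM.nu_empty
  · intro A B hd
    exact hPM.add (hDall A) (hDall B) hd
  · intro n
    rw [hνP {n} (hPfin {n} (Set.finite_singleton n))]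
    exact hsing n
end

section
/- Let Ξ₀ be a partial finitely additive measure on ω, ⟨A_α : α < α*⟩ subsets of ω, and a_α ≤ b_α in [0,1]. If there is a full finitely additive measure Ξ on P(ω) extending Ξ₀ with Ξ(A_α) ∈ [a_α, b_α] for all α, then: for all ε > 0, all k ∈ ω, every finite partition ⟨A*₀,…,A*_{m−1}⟩ of ω into sets of dom(Ξ₀) of positive Ξ₀-measure, and all α₀ < … < α_{n−1} < α*, there is a finite nonempty u ⊆ ω ∖ k such that for all ℓ < n and i < m: a_{α_ℓ} − ε ≤ |A_{α_ℓ} ∩ u|/|u| ≤ b_{α_ℓ} + ε, and Ξ₀(A*_i) − ε ≤ |A*_i ∩ u|/|u| ≤ Ξ₀(A*_i) + ε. -/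
universe u

private lemma fa_biUnion {ι : Type*} (Ξ : Set ℕ → ℝ)
    (hΞ0 : Ξ ∅ = 0)
    (hΞadd : ∀ A' B' : Set ℕ, Disjoint A' B' → Ξ (A' ∪ B') = Ξ A' + Ξ B')
    (F : Finset ι) (C : ι → Set ℕ)
    (hdisj : ∀ i ∈ F, ∀ j ∈ F, i ≠ j → Disjoint (C i) (C j)) :
    Ξ (⋃ i ∈ F, C i) = ∑ i ∈ F, Ξ (C i) := by
  classical
  induction F using Finset.induction_on with
  | empty => simpa using hΞ0
  | @insert a F' haF ih =>
    have hd : Disjoint (C a) (⋃ i ∈ F', C i) := by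
      rw [Set.disjoint_iUnion_right]
      intro i
      rw [Set.disjoint_iUnion_right]
      intro hi
      exact hdisj a (Finset.mem_insert_self a F') i (Finset.mem_insert_of_mem hi)
        (by rintro rfl; exact haF hi)
    rw [Finset.set_biUnion_insert, hΞadd _ _ hd, Finset.sum_insert haF,
      ih (fun i hi j hj hij => hdisj i (Finset.mem_insert_of_mem hi) j
        (Finset.mem_insert_of_mem hj) hij)]

private lemma fa_finset_zero (Ξ : Set ℕ → ℝ) (hΞ0 : Ξ ∅ = 0)
    (hΞadd : ∀ A' B' : Set ℕ, Disjoint A' B' → Ξ (A' ∪ B') = Ξ A' + Ξ B')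
    (hΞsing : ∀ n : ℕ, Ξ {n} = 0) (v : Finset ℕ) : Ξ ↑v = 0 := by
  classical
  induction v using Finset.induction_on with
  | empty => simpa using hΞ0
  | @insert a v' hav ih =>
    have h : (↑(insert a v') : Set ℕ) = {a} ∪ ↑v' := by
      rw [Finset.coe_insert, Set.insert_eq]
    rw [h, hΞadd _ _ (by simpa using hav), hΞsing, ih, add_zero]

private lemma fa_finite_zero (Ξ : Set ℕ → ℝ) (hΞ0 : Ξ ∅ = 0)
    (hΞadd : ∀ A' B' : Set ℕ, Disjoint A' B' → Ξ (A' ∪ B') = Ξ A' + Ξ B')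
    (hΞsing : ∀ n : ℕ, Ξ {n} = 0) (S : Set ℕ) (hS : S.Finite) : Ξ S = 0 := by
  have := fa_finset_zero Ξ hΞ0 hΞadd hΞsing hS.toFinset
  rwa [Set.Finite.coe_toFinset] at this

set_option maxHeartbeats 1000000 in
/-- Proposition 3.3, (3.A) ⇒ (3.B): if a full finitely additive measure `Ξ` extends `Ξ₀`
with `Ξ(A_α) ∈ [a_α, b_α]`, then for every `ε > 0`, every `k`, every finite partition of
`ω` into `Ξ₀`-positive sets of the domain, and finitely many `α < α*`, there is a finite
nonempty `u ⊆ ω ∖ k` approximating all the prescribed densities up to `ε`. -/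
theorem stmt5 (P : Set (Set ℕ))
    (hPfin : ∀ A : Set ℕ, A.Finite → A ∈ P)
    (hPcompl : ∀ A ∈ P, Aᶜ ∈ P)
    (hPunion : ∀ A ∈ P, ∀ B ∈ P, A ∪ B ∈ P)
    (Ξ₀ : Set ℕ → ℝ)
    (hrange : ∀ A ∈ P, Ξ₀ A ∈ Set.Icc (0 : ℝ) 1)
    (h0 : Ξ₀ ∅ = 0) (h1 : Ξ₀ Set.univ = 1)
    (hadd : ∀ A ∈ P, ∀ B ∈ P, Disjoint A B → Ξ₀ (A ∪ B) = Ξ₀ A + Ξ₀ B)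
    (hsing : ∀ n : ℕ, Ξ₀ {n} = 0)
    (αstar : Ordinal.{u}) (A : Ordinal.{u} → Set ℕ) (a b : Ordinal.{u} → ℝ)
    (hab : ∀ α < αstar, 0 ≤ a α ∧ a α ≤ b α ∧ b α ≤ 1)
    -- (3.A): a full finitely additive extension with the prescribed values
    (Ξ : Set ℕ → ℝ)
    (hΞrange : ∀ A' : Set ℕ, Ξ A' ∈ Set.Icc (0 : ℝ) 1)
    (hΞ0 : Ξ ∅ = 0) (hΞ1 : Ξ Set.univ = 1)
    (hΞadd : ∀ A' B' : Set ℕ, Disjoint A' B' → Ξ (A' ∪ B') = Ξ A' + Ξ B')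
    (hΞsing : ∀ n : ℕ, Ξ {n} = 0)
    (hΞext : ∀ A' ∈ P, Ξ A' = Ξ₀ A')
    (hΞval : ∀ α < αstar, Ξ (A α) ∈ Set.Icc (a α) (b α)) :
    -- (3.B)
    ∀ ε : ℝ, 0 < ε → ∀ k : ℕ,
      ∀ (m : ℕ) (As : Fin m → Set ℕ),
        (∀ i, As i ∈ P) →
        (∀ i j, i ≠ j → Disjoint (As i) (As j)) →
        (⋃ i, As i) = Set.univ →
        (∀ i, 0 < Ξ₀ (As i)) →
        ∀ s : Finset Ordinal.{u}, (∀ α ∈ s, α < αstar) →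
          ∃ u : Finset ℕ, u.Nonempty ∧ (∀ x ∈ u, k ≤ x) ∧
            (∀ α ∈ s,
              a α - ε ≤ ((A α ∩ ↑u).ncard : ℝ) / u.card ∧
              ((A α ∩ ↑u).ncard : ℝ) / u.card ≤ b α + ε) ∧
            (∀ i : Fin m,
              Ξ₀ (As i) - ε ≤ ((As i ∩ ↑u).ncard : ℝ) / u.card ∧
              ((As i ∩ ↑u).ncard : ℝ) / u.card ≤ Ξ₀ (As i) + ε) := by
  classical
  intro ε hε k m As hAsP hAsdisj hAscover hAspos s hs
  -- the atoms
  set ι := Fin m × ({x // x ∈ s} → Bool) with hι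
  set C : ι → Set ℕ := fun t => As t.1 ∩ ⋂ α : {x // x ∈ s},
    (if t.2 α then A ↑α else (A ↑α)ᶜ) with hC
  have hmemC : ∀ (n : ℕ) (t : ι), n ∈ C t ↔
      n ∈ As t.1 ∧ ∀ α : {x // x ∈ s}, n ∈ (if t.2 α then A ↑α else (A ↑α)ᶜ) := by
    intro n t
    simp [hC, Set.mem_iInter]
  -- atoms are pairwise disjoint
  have hCd : ∀ t t' : ι, t ≠ t' → Disjoint (C t) (C t') := by
    intro t t' htt'
    by_cases h1 : t.1 = t'.1
    · have h2 : t.2 ≠ t'.2 := by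
        intro h2; exact htt' (Prod.ext h1 h2)
      obtain ⟨α, hα⟩ : ∃ α, t.2 α ≠ t'.2 α := by
        by_contra hc
        push_neg at hc
        exact h2 (funext hc)
      rw [Set.disjoint_left]
      intro n hn hn'
      have e1 := ((hmemC n t).1 hn).2 α
      have e2 := ((hmemC n t').1 hn').2 α
      cases hb : t.2 α with
      | true =>
        have hb' : t'.2 α = false := by
          cases hb2 : t'.2 α
          · rfl
          · exact absurd (hb.trans hb2.symm) hα
        rw [hb] at e1; rw [hb'] at e2
        simp at e1 e2
        exact e2 e1
      | false =>
        have hb' : t'.2 α = true := by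
          cases hb2 : t'.2 α
          · exact absurd (hb.trans hb2.symm) hα
          · rfl
        rw [hb] at e1; rw [hb'] at e2
        simp at e1 e2
        exact e1 e2
    · exact Set.disjoint_of_subset (fun n hn => ((hmemC n t).1 hn).1)
        (fun n hn => ((hmemC n t').1 hn).1) (hAsdisj _ _ h1)
  -- every point lies in an atom
  have hidx : ∀ n : ℕ, ∃ i, n ∈ As i := by
    intro n
    have : n ∈ ⋃ i, As i := by rw [hAscover]; trivial
    simpa using this
  choose idx hidxmem using hidx
  set atomOf : ℕ → ι := fun n => (idx n, fun α => decide (n ∈ A ↑α)) with hatomOf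
  have hatom : ∀ n : ℕ, n ∈ C (atomOf n) := by
    intro n
    rw [hmemC]
    refine ⟨hidxmem n, fun α => ?_⟩
    by_cases h : n ∈ A ↑α
    · simp [hatomOf, h]
    · simp [hatomOf, h]
  have hCcover : (⋃ t ∈ (Finset.univ : Finset ι), C t) = Set.univ := by
    ext n
    simp only [Set.mem_iUnion, Set.mem_univ, iff_true]
    exact ⟨atomOf n, by simp, hatom n⟩
  -- weights
  set w : ι → ℝ := fun t => Ξ (C t) with hw
  have hwnn : ∀ t, 0 ≤ w t := fun t => (hΞrange (C t)).1
  have hwsum : ∑ t : ι, w t = 1 := by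
    rw [← fa_biUnion Ξ hΞ0 hΞadd Finset.univ C
      (fun i _ j _ hij => hCd i j hij), hCcover, hΞ1]
  -- parameters
  set T : ℕ := Fintype.card ι with hT
  set N : ℕ := T + ⌈(T : ℝ) / ε⌉₊ + 1 with hN
  have hNcast : (N : ℝ) = (T : ℝ) + (⌈(T : ℝ) / ε⌉₊ : ℝ) + 1 := by
    rw [hN]; push_cast; ring
  have hTN : (T : ℝ) < N := by
    have h1 : (0 : ℝ) ≤ (⌈(T : ℝ) / ε⌉₊ : ℝ) := Nat.cast_nonneg _
    linarith
  have hTεN : (T : ℝ) / ε ≤ (N : ℝ) - T := by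
    have := Nat.le_ceil ((T : ℝ) / ε)
    linarith
  have hkey : (T : ℝ) ≤ ε * ((N : ℝ) - T) := by
    have := (div_le_iff₀ hε).1 hTεN
    linarith [this]
  -- sizes of the pieces
  set nn : ι → ℕ := fun t => ⌊(N : ℝ) * w t⌋₊ with hnn
  have hfl1 : ∀ t, (nn t : ℝ) ≤ (N : ℝ) * w t := fun t =>
    Nat.floor_le (mul_nonneg (Nat.cast_nonneg N) (hwnn t))
  have hfl2 : ∀ t, (N : ℝ) * w t - 1 < (nn t : ℝ) := fun t =>
    Nat.sub_one_lt_floor _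
  -- choose the pieces
  have hU : ∀ t : ι, ∃ v : Finset ℕ, ↑v ⊆ C t ∩ Set.Ici k ∧ v.card = nn t := by
    intro t
    by_cases hinf : (C t ∩ Set.Ici k).Infinite
    · obtain ⟨v, hv1, hv2⟩ := hinf.exists_subset_card_eq (nn t)
      exact ⟨v, hv1, hv2⟩
    · rw [Set.not_infinite] at hinf
      have hCfin : (C t).Finite := by
        have hsub : C t ⊆ (C t ∩ Set.Ici k) ∪ Set.Iio k := by
          intro n hn
          by_cases h : k ≤ n
          · exact Or.inl ⟨hn, h⟩
          · exact Or.inr (by simpa using lt_of_not_ge h)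
        exact Set.Finite.subset (hinf.union (Set.finite_Iio k)) hsub
      have hw0 : w t = 0 := fa_finite_zero Ξ hΞ0 hΞadd hΞsing _ hCfin
      refine ⟨∅, by simp, ?_⟩
      simp [hnn, hw0]
  choose U hU1 hU2 using hU
  have hUsubC : ∀ t : ι, ∀ n ∈ U t, n ∈ C t := by
    intro t n hn
    exact (hU1 t hn).1
  have hUdisj : ∀ t ∈ (Finset.univ : Finset ι), ∀ t' ∈ (Finset.univ : Finset ι),
      t ≠ t' → Disjoint (U t) (U t') := by
    intro t _ t' _ htt'
    rw [Finset.disjoint_left]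
    intro n hn hn'
    exact (hCd t t' htt').le_bot ⟨hUsubC t n hn, hUsubC t' n hn'⟩
  set u : Finset ℕ := Finset.univ.biUnion U with hu
  have hcardu : u.card = ∑ t : ι, nn t := by
    rw [hu, Finset.card_biUnion hUdisj]
    exact Finset.sum_congr rfl (fun t _ => hU2 t)
  have hcarducast : (u.card : ℝ) = ∑ t : ι, (nn t : ℝ) := by
    rw [hcardu]; push_cast; rfl
  -- bounds on |u|
  have hMleN : (u.card : ℝ) ≤ N := by
    rw [hcarducast]
    calc ∑ t : ι, (nn t : ℝ) ≤ ∑ t : ι, (N : ℝ) * w t :=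
          Finset.sum_le_sum (fun t _ => hfl1 t)
      _ = (N : ℝ) * ∑ t : ι, w t := by rw [Finset.mul_sum]
      _ = N := by rw [hwsum, mul_one]
  have hNTleM : (N : ℝ) - T ≤ u.card := by
    rw [hcarducast]
    have h1 : ∑ t : ι, ((N : ℝ) * w t - 1) ≤ ∑ t : ι, (nn t : ℝ) :=
      Finset.sum_le_sum (fun t _ => (hfl2 t).le)
    have h2 : ∑ t : ι, ((N : ℝ) * w t - 1) = (N : ℝ) - T := by
      rw [Finset.sum_sub_distrib, ← Finset.mul_sum, hwsum, mul_one]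
      simp [hT]
    linarith
  have hMpos : (0 : ℝ) < u.card := by linarith
  have hMposn : 0 < u.card := by exact_mod_cast hMpos
  -- counting
  have hcount : ∀ (S : Set ℕ) (F : Finset ι), S = ⋃ t ∈ F, C t →
      ((S ∩ ↑u).ncard : ℝ) = ∑ t ∈ F, (nn t : ℝ) := by
    intro S F hSF
    have h1 : S ∩ ↑u = ↑(u.filter (· ∈ S)) := by
      ext n; simp [and_comm]
    rw [h1, Set.ncard_coe_finset]
    have h2 : u.filter (· ∈ S) = Finset.univ.biUnion (fun t => (U t).filter (· ∈ S)) := by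
      rw [hu, Finset.filter_biUnion]
    have h3 : ∀ t : ι, ((U t).filter (· ∈ S)).card = if t ∈ F then nn t else 0 := by
      intro t
      by_cases htF : t ∈ F
      · rw [if_pos htF, Finset.filter_true_of_mem, hU2]
        intro n hn
        rw [hSF]
        exact Set.mem_biUnion htF (hUsubC t n hn)
      · rw [if_neg htF, Finset.card_eq_zero, Finset.filter_eq_empty_iff]
        intro n hn hnS
        rw [hSF] at hnS
        simp only [Set.mem_iUnion] at hnS
        obtain ⟨t', ht'F, hnt'⟩ := hnS
        exact (hCd t t' (fun e => htF (e ▸ ht'F))).le_bot ⟨hUsubC t n hn, hnt'⟩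
    rw [h2, Finset.card_biUnion (fun t _ t' _ h =>
      Finset.disjoint_filter_filter (hUdisj t (Finset.mem_univ t) t' (Finset.mem_univ t') h))]
    have h4 : ∑ t : ι, ((U t).filter (· ∈ S)).card = ∑ t ∈ F, nn t := by
      rw [Finset.sum_congr rfl (fun t _ => h3 t), Finset.sum_ite_mem, Finset.univ_inter]
    rw [h4]
    push_cast
    rfl
  -- the main estimate
  have hest : ∀ (S : Set ℕ) (F : Finset ι), S = ⋃ t ∈ F, C t →
      Ξ S - ε ≤ ((S ∩ ↑u).ncard : ℝ) / u.card ∧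
      ((S ∩ ↑u).ncard : ℝ) / u.card ≤ Ξ S + ε := by
    intro S F hSF
    have hWsum : Ξ S = ∑ t ∈ F, w t := by
      rw [hSF]
      exact fa_biUnion Ξ hΞ0 hΞadd F C (fun i _ j _ hij => hCd i j hij)
    have hW0 : 0 ≤ Ξ S := (hΞrange S).1
    have hW1 : Ξ S ≤ 1 := (hΞrange S).2
    have hcnt := hcount S F hSF
    set c : ℝ := ∑ t ∈ F, (nn t : ℝ) with hc
    have hc0 : 0 ≤ c := Finset.sum_nonneg (fun t _ => Nat.cast_nonneg _)
    have hcle : c ≤ (N : ℝ) * Ξ S := by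
      rw [hWsum, Finset.mul_sum]
      exact Finset.sum_le_sum (fun t _ => hfl1 t)
    have hcge : (N : ℝ) * Ξ S - T ≤ c := by
      have h1 : ∑ t ∈ F, ((N : ℝ) * w t - 1) ≤ c :=
        Finset.sum_le_sum (fun t _ => (hfl2 t).le)
      have h2 : ∑ t ∈ F, ((N : ℝ) * w t - 1) =
          (N : ℝ) * Ξ S - F.card := by
        rw [Finset.sum_sub_distrib, ← Finset.mul_sum, ← hWsum]
        simp
      have h3 : (F.card : ℝ) ≤ T := by
        rw [hT, ← Finset.card_univ]
        exact_mod_cast Finset.card_le_univ F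
      linarith
    rw [hcnt]
    constructor
    · have h1 : c / (N : ℝ) ≤ c / u.card :=
        div_le_div_of_nonneg_left hc0 hMpos hMleN
      have hNpos : (0 : ℝ) < N := by linarith
      have h2 : ((N : ℝ) * Ξ S - T) / N ≤ c / N := by gcongr
      have h3 : ((N : ℝ) * Ξ S - T) / N = Ξ S - T / N := by
        field_simp
      have h4 : (T : ℝ) / N ≤ ε := by
        rw [div_le_iff₀ hNpos]
        nlinarith [hkey, mul_nonneg hε.le (Nat.cast_nonneg T : (0:ℝ) ≤ (T:ℝ))]
      linarith
    · have hch : c / u.card ≤ ((N : ℝ) * Ξ S) / ((N : ℝ) - T) :=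
        div_le_div₀ (mul_nonneg (Nat.cast_nonneg N) hW0) hcle (by linarith) hNTleM
      have h5 : ((N : ℝ) * Ξ S) / ((N : ℝ) - T) ≤ Ξ S + ε := by
        rw [div_le_iff₀ (by linarith)]
        have e1 : Ξ S * (T : ℝ) ≤ (T : ℝ) :=
          mul_le_of_le_one_left (Nat.cast_nonneg T) hW1
        have e2 : (Ξ S + ε) * ((N : ℝ) - T)
            = Ξ S * ((N : ℝ) - T) + ε * ((N : ℝ) - T) := by ring
        have e3 : (N : ℝ) * Ξ S = Ξ S * ((N : ℝ) - T) + Ξ S * (T : ℝ) := by ring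
        linarith [hkey, e1]
      exact hch.trans h5
  -- conclude
  refine ⟨u, Finset.card_pos.1 hMposn, ?_, ?_, ?_⟩
  · intro x hx
    rw [hu] at hx
    simp only [Finset.mem_biUnion] at hx
    obtain ⟨t, _, hxt⟩ := hx
    exact (hU1 t hxt).2
  · intro α hαs
    have hαlt := hs α hαs
    have hFA : A α = ⋃ t ∈ Finset.univ.filter
        (fun t : ι => t.2 ⟨α, hαs⟩ = true), C t := by
      ext n
      simp only [Set.mem_iUnion, Finset.mem_filter, Finset.mem_univ, true_and]
      constructor
      · intro hn
        refine ⟨atomOf n, ?_, hatom n⟩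
        simp [hatomOf, hn]
      · rintro ⟨t, ht, hnt⟩
        have := ((hmemC n t).1 hnt).2 ⟨α, hαs⟩
        rw [ht] at this
        simpa using this
    obtain ⟨hle, hge⟩ := hest (A α) _ hFA
    obtain ⟨hv1, hv2⟩ := hΞval α hαlt
    exact ⟨by linarith, by linarith⟩
  · intro i
    have hFA : As i = ⋃ t ∈ Finset.univ.filter (fun t : ι => t.1 = i), C t := by
      ext n
      simp only [Set.mem_iUnion, Finset.mem_filter, Finset.mem_univ, true_and]
      constructor
      · intro hn
        refine ⟨atomOf n, ?_, hatom n⟩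
        by_contra h
        exact (hAsdisj _ _ h).le_bot ⟨hidxmem n, hn⟩
      · rintro ⟨t, ht, hnt⟩
        have := ((hmemC n t).1 hnt).1
        rwa [ht] at this
    obtain ⟨hle, hge⟩ := hest (As i) _ hFA
    rw [hΞext (As i) (hAsP i)] at hle hge
    exact ⟨hle, hge⟩
end

section
/- Assume Ξ is a full finitely additive probability measure on P(ω) vanishing on singletons, a^i_ℓ ∈ [0,1] for i < i* < ω and ℓ ∈ ω, B ⊆ ω with Ξ(B) > 0, and Av_{Ξ_B}(⟨a^i_ℓ : ℓ < ω⟩) = b_i for i < i*, where Ξ_B(X) = Ξ(B ∩ X)/Ξ(B). Then for every m* < ω and ε > 0 there is a finite u ⊆ B ∖ m* such that for every i < i*: b_i − ε < (Σ_{ℓ ∈ u} a^i_ℓ)/|u| < b_i + ε. -/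
/-- The finitely additive average `Av_Ξ(ā)`: the supremum over finite partitions
`⟨A_i : i < k⟩` of `ω` of the lower sums `Σ_i Ξ(A_i)·inf(a '' A_i)`. -/
noncomputable def Av (Ξ : Set ℕ → ℝ) (a : ℕ → ℝ) : ℝ :=
  sSup {x : ℝ | ∃ (k : ℕ) (A : Fin k → Set ℕ),
    (∀ i j, i ≠ j → Disjoint (A i) (A j)) ∧ (⋃ i, A i) = Set.univ ∧
    x = ∑ i, Ξ (A i) * sInf (a '' A i)}

section aux
variable (ν : Set ℕ → ℝ)

lemma fa_biUnion_s7 (h0 : ν ∅ = 0)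
    (hadd : ∀ A B : Set ℕ, Disjoint A B → ν (A ∪ B) = ν A + ν B)
    {ι : Type*} (s : Finset ι) (A : ι → Set ℕ)
    (hdisj : ∀ i ∈ s, ∀ j ∈ s, i ≠ j → Disjoint (A i) (A j)) :
    ν (⋃ i ∈ s, A i) = ∑ i ∈ s, ν (A i) := by
  classical
  induction s using Finset.induction_on with
  | empty => simpa using h0
  | @insert x s hx ih =>
    rw [Finset.sum_insert hx,
      ← ih (fun i hi j hj hij => hdisj i (Finset.mem_insert_of_mem hi) j (Finset.mem_insert_of_mem hj) hij),
      Finset.set_biUnion_insert, hadd]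
    rw [Set.disjoint_iUnion₂_right]
    intro i hi
    exact hdisj x (Finset.mem_insert_self x s) i (Finset.mem_insert_of_mem hi)
      (by rintro rfl; exact hx hi)

lemma fa_mono (hnn : ∀ A : Set ℕ, 0 ≤ ν A)
    (hadd : ∀ A B : Set ℕ, Disjoint A B → ν (A ∪ B) = ν A + ν B)
    {X Y : Set ℕ} (h : X ⊆ Y) : ν X ≤ ν Y := by
  have := hadd X (Y \ X) disjoint_sdiff_self_right
  rw [Set.union_diff_cancel h] at this
  nlinarith [hnn (Y \ X)]

lemma fa_fin (h0 : ν ∅ = 0)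
    (hadd : ∀ A B : Set ℕ, Disjoint A B → ν (A ∪ B) = ν A + ν B)
    (hsing : ∀ n : ℕ, ν {n} = 0) (s : Finset ℕ) : ν ↑s = 0 := by
  classical
  induction s using Finset.induction_on with
  | empty => simpa using h0
  | @insert x s hx ih =>
    have : ν (↑(insert x s) : Set ℕ) = ν {x} + ν ↑s := by
      rw [Finset.coe_insert, Set.insert_eq, hadd]
      simpa using hx
    rw [this, hsing, ih]; ring

end aux

/-- Proposition 3.5: if `Av_{Ξ_B}(⟨a^i_ℓ⟩) = b_i` for `i < i*` (where `Ξ_B` is the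
conditional measure on a `Ξ`-positive set `B`), then for every `m*` and `ε > 0` there is
a finite nonempty `u ⊆ B ∖ m*` whose averages of each `⟨a^i_ℓ⟩` are within `ε` of `b_i`. -/
theorem stmt7 (Ξ : Set ℕ → ℝ)
    (hrange : ∀ A : Set ℕ, Ξ A ∈ Set.Icc (0 : ℝ) 1)
    (h0 : Ξ ∅ = 0) (h1 : Ξ Set.univ = 1)
    (hadd : ∀ A B : Set ℕ, Disjoint A B → Ξ (A ∪ B) = Ξ A + Ξ B)
    (hsing : ∀ n : ℕ, Ξ {n} = 0)
    (istar : ℕ) (a : Fin istar → ℕ → ℝ)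
    (ha : ∀ i ℓ, a i ℓ ∈ Set.Icc (0 : ℝ) 1)
    (B : Set ℕ) (hB : 0 < Ξ B)
    (b : Fin istar → ℝ)
    (hAv : ∀ i, Av (fun X => Ξ (B ∩ X) / Ξ B) (a i) = b i)
    (mstar : ℕ) (ε : ℝ) (hε : 0 < ε) :
    ∃ u : Finset ℕ, u.Nonempty ∧ (∀ x ∈ u, x ∈ B ∧ mstar ≤ x) ∧
      ∀ i : Fin istar,
        b i - ε < (∑ ℓ ∈ u, a i ℓ) / u.card ∧ (∑ ℓ ∈ u, a i ℓ) / u.card < b i + ε := by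
  classical
  set ν : Set ℕ → ℝ := fun X => Ξ (B ∩ X) / Ξ B with hνdef
  -- basic properties of ν
  have hΞnn : ∀ A : Set ℕ, 0 ≤ Ξ A := fun A => (hrange A).1
  have hν0 : ν ∅ = 0 := by simp [hνdef, h0]
  have hν1 : ν Set.univ = 1 := by
    simp [hνdef, div_self (ne_of_gt hB)]
  have hνadd : ∀ X Y : Set ℕ, Disjoint X Y → ν (X ∪ Y) = ν X + ν Y := by
    intro X Y hXY
    have : B ∩ (X ∪ Y) = (B ∩ X) ∪ (B ∩ Y) := Set.inter_union_distrib_left B X Y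
    simp only [hνdef, this, hadd _ _ (hXY.mono (Set.inter_subset_right) (Set.inter_subset_right))]
    ring
  have hνnn : ∀ X : Set ℕ, 0 ≤ ν X := fun X => div_nonneg (hΞnn _) hB.le
  -- choose K
  set K : ℕ := ⌈2/ε⌉₊ + 1 with hKdef
  have hK0 : 0 < K := Nat.succ_pos _
  have hKR : (0:ℝ) < K := by exact_mod_cast hK0
  have hKε : 1/(K:ℝ) < ε/2 := by
    rw [div_lt_iff₀ hKR]
    have h2 : 2/ε < (K:ℝ) := by
      calc 2/ε ≤ (⌈2/ε⌉₊ : ℝ) := Nat.le_ceil _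
      _ < (K:ℝ) := by exact_mod_cast Nat.lt_succ_self _
    calc (1:ℝ) = (ε/2) * (2/ε) := by field_simp
    _ < (ε/2) * K := by
        apply mul_lt_mul_of_pos_left h2 (by linarith)
  -- the cell decomposition
  have hcfv : ∀ (i : Fin istar) (ℓ : ℕ), min ⌊a i ℓ * K⌋₊ (K-1) < K :=
    fun i ℓ => Nat.lt_of_le_of_lt (min_le_right _ _) (by omega)
  set cfun : ℕ → (Fin istar → Fin K) :=
    fun ℓ i => ⟨min ⌊a i ℓ * K⌋₊ (K-1), hcfv i ℓ⟩ with hcfun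
  set C : (Fin istar → Fin K) → Set ℕ := fun f => cfun ⁻¹' {f} with hC
  have hCdisj : ∀ f g, f ≠ g → Disjoint (C f) (C g) := by
    intro f g hfg
    rw [Set.disjoint_left]
    intro ℓ hf hg
    exact hfg (hf.symm.trans hg)
  have hCuniv : (⋃ f, C f) = Set.univ := by
    ext ℓ; simp only [Set.mem_iUnion, Set.mem_univ, iff_true]
    exact ⟨cfun ℓ, rfl⟩
  -- floor bounds
  have hcf : ∀ (i : Fin istar) (ℓ : ℕ),
      ((cfun ℓ i : ℕ) : ℝ) ≤ a i ℓ * K ∧ a i ℓ * K ≤ ((cfun ℓ i : ℕ) : ℝ) + 1 := by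
    intro i ℓ
    have h0a : 0 ≤ a i ℓ := (ha i ℓ).1
    have h1a : a i ℓ ≤ 1 := (ha i ℓ).2
    have hnn : 0 ≤ a i ℓ * K := mul_nonneg h0a hKR.le
    constructor
    · have : ((min ⌊a i ℓ * K⌋₊ (K-1) : ℕ) : ℝ) ≤ (⌊a i ℓ * K⌋₊ : ℝ) := by
        exact_mod_cast min_le_left _ _
      exact this.trans (Nat.floor_le hnn)
    · rcases le_or_gt ⌊a i ℓ * K⌋₊ (K-1) with h | h
      · have : min ⌊a i ℓ * K⌋₊ (K-1) = ⌊a i ℓ * K⌋₊ := min_eq_left h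
        rw [hcfun]; simp only [this]
        exact (Nat.lt_floor_add_one _).le
      · have : min ⌊a i ℓ * K⌋₊ (K-1) = K - 1 := min_eq_right h.le
        rw [hcfun]; simp only [this]
        have : ((K - 1 : ℕ) : ℝ) = (K:ℝ) - 1 := by
          have : (1:ℕ) ≤ K := hK0
          push_cast [Nat.cast_sub this]; ring
        rw [this]
        nlinarith
  -- oscillation within a cell
  have hosc : ∀ (f : Fin istar → Fin K) (i : Fin istar) (ℓ ℓ' : ℕ),
      ℓ ∈ C f → ℓ' ∈ C f → a i ℓ ≤ a i ℓ' + 1/K := by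
    intro f i ℓ ℓ' hℓ hℓ'
    have h1 : cfun ℓ = f := hℓ
    have h2 : cfun ℓ' = f := hℓ'
    have he : ((cfun ℓ i : ℕ) : ℝ) = ((cfun ℓ' i : ℕ) : ℝ) := by rw [h1, h2]
    have u1 := (hcf i ℓ).2
    have u2 := (hcf i ℓ').1
    have hm : a i ℓ * K ≤ a i ℓ' * K + 1 := by rw [he] at u1; linarith
    have hc : (1/(K:ℝ)) * K = 1 := one_div_mul_cancel (ne_of_gt hKR)
    nlinarith [hm, hKR]
  -- sInf facts
  have hbdd : ∀ (i : Fin istar) (s : Set ℕ), BddBelow (a i '' s) := by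
    intro i s
    exact ⟨0, by rintro x ⟨ℓ, _, rfl⟩; exact (ha i ℓ).1⟩
  have hinf0 : ∀ (i : Fin istar) (s : Set ℕ), 0 ≤ sInf (a i '' s) := by
    intro i s
    apply Real.sInf_nonneg
    rintro x ⟨ℓ, _, rfl⟩; exact (ha i ℓ).1
  have hinf1 : ∀ (i : Fin istar) (s : Set ℕ), sInf (a i '' s) ≤ 1 := by
    intro i s
    rcases s.eq_empty_or_nonempty with rfl | ⟨ℓ, hℓ⟩
    · simp [Real.sInf_empty]
    · exact (csInf_le (hbdd i s) ⟨ℓ, hℓ, rfl⟩).trans (ha i ℓ).2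
  have hinfle : ∀ (i : Fin istar) (s : Set ℕ) (ℓ : ℕ), ℓ ∈ s → sInf (a i '' s) ≤ a i ℓ :=
    fun i s ℓ hℓ => csInf_le (hbdd i s) ⟨ℓ, hℓ, rfl⟩
  have hcellub : ∀ (f : Fin istar → Fin K) (i : Fin istar) (ℓ : ℕ), ℓ ∈ C f →
      a i ℓ ≤ sInf (a i '' C f) + 1/K := by
    intro f i ℓ hℓ
    have h' : a i ℓ - 1/K ≤ sInf (a i '' C f) := by
      refine le_csInf ⟨a i ℓ, ⟨ℓ, hℓ, rfl⟩⟩ ?_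
      rintro x ⟨ℓ', hℓ', rfl⟩
      linarith [hosc f i ℓ ℓ' hℓ hℓ']
    linarith
  -- total measure of cells
  have hsum1 : ∑ f : Fin istar → Fin K, ν (C f) = 1 := by
    have h' := fa_biUnion_s7 ν hν0 hνadd Finset.univ C (fun f _ g _ h => hCdisj f g h)
    rw [← h']
    rw [show (⋃ f ∈ (Finset.univ : Finset (Fin istar → Fin K)), C f) = ⋃ f, C f by simp,
      hCuniv, hν1]
  set L : Fin istar → ℝ := fun i => ∑ f : Fin istar → Fin K, ν (C f) * sInf (a i '' C f)
    with hLdef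
  -- every lower sum is at most L i + 1/K
  have hub : ∀ (i : Fin istar) (x : ℝ), (∃ (k : ℕ) (A : Fin k → Set ℕ),
      (∀ j j', j ≠ j' → Disjoint (A j) (A j')) ∧ (⋃ j, A j) = Set.univ ∧
      x = ∑ j, ν (A j) * sInf (a i '' A j)) → x ≤ L i + 1/K := by
    rintro i x ⟨k, A, hAdisj, hAuniv, rfl⟩
    have hAν : ∀ j, ν (A j) = ∑ f : Fin istar → Fin K, ν (A j ∩ C f) := by
      intro j
      have hsplit : A j = ⋃ f ∈ (Finset.univ : Finset (Fin istar → Fin K)), (A j ∩ C f) := by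
        simp [← Set.inter_iUnion, hCuniv]
      calc ν (A j) = ν (⋃ f ∈ (Finset.univ : Finset (Fin istar → Fin K)), (A j ∩ C f)) := by
            rw [← hsplit]
      _ = ∑ f : Fin istar → Fin K, ν (A j ∩ C f) := fa_biUnion_s7 ν hν0 hνadd _ _
            (fun f _ g _ h => ((hCdisj f g h).mono Set.inter_subset_right Set.inter_subset_right))
    have hCν : ∀ f : Fin istar → Fin K, ν (C f) = ∑ j, ν (A j ∩ C f) := by
      intro f
      have hsplit : C f = ⋃ j ∈ (Finset.univ : Finset (Fin k)), (A j ∩ C f) := by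
        simp [← Set.iUnion_inter, hAuniv]
      calc ν (C f) = ν (⋃ j ∈ (Finset.univ : Finset (Fin k)), (A j ∩ C f)) := by rw [← hsplit]
      _ = ∑ j, ν (A j ∩ C f) := fa_biUnion_s7 ν hν0 hνadd _ _
            (fun j _ j' _ h => ((hAdisj j j' h).mono Set.inter_subset_left Set.inter_subset_left))
    calc ∑ j, ν (A j) * sInf (a i '' A j)
        = ∑ j, ∑ f : Fin istar → Fin K, ν (A j ∩ C f) * sInf (a i '' A j) := by
          simp_rw [← Finset.sum_mul, ← hAν]
    _ ≤ ∑ j, ∑ f : Fin istar → Fin K, ν (A j ∩ C f) * (sInf (a i '' C f) + 1/K) := by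
        apply Finset.sum_le_sum; intro j _
        apply Finset.sum_le_sum; intro f _
        rcases (A j ∩ C f).eq_empty_or_nonempty with he | ⟨ℓ, hℓA, hℓC⟩
        · rw [he]; simp [hν0]
        · apply mul_le_mul_of_nonneg_left _ (hνnn _)
          exact (hinfle i (A j) ℓ hℓA).trans (hcellub f i ℓ hℓC)
    _ = ∑ f : Fin istar → Fin K, (∑ j, ν (A j ∩ C f)) * (sInf (a i '' C f) + 1/K) := by
        rw [Finset.sum_comm]; simp_rw [Finset.sum_mul]
    _ = ∑ f : Fin istar → Fin K, ν (C f) * (sInf (a i '' C f) + 1/K) := by simp_rw [← hCν]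
    _ = L i + (∑ f : Fin istar → Fin K, ν (C f)) * (1/K) := by
        rw [hLdef]; simp_rw [mul_add]
        rw [Finset.sum_add_distrib, Finset.sum_mul]
    _ = L i + 1/K := by rw [hsum1]; ring
  -- L i is a lower sum
  have hmem : ∀ i : Fin istar, ∃ (k : ℕ) (A : Fin k → Set ℕ),
      (∀ j j', j ≠ j' → Disjoint (A j) (A j')) ∧ (⋃ j, A j) = Set.univ ∧
      L i = ∑ j, ν (A j) * sInf (a i '' A j) := by
    intro i
    set e := Fintype.equivFin (Fin istar → Fin K) with he
    refine ⟨Fintype.card (Fin istar → Fin K), fun j => C (e.symm j), ?_, ?_, ?_⟩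
    · intro j j' h
      exact hCdisj _ _ (fun hc => h (e.symm.injective hc))
    · apply Set.eq_univ_iff_forall.mpr
      intro x
      exact Set.mem_iUnion.mpr ⟨e (cfun x), by simp [hC]⟩
    · rw [hLdef]
      exact (Equiv.sum_comp e.symm (fun f => ν (C f) * sInf (a i '' C f))).symm
  have hAvset : ∀ i : Fin istar, Av ν (a i) = sSup {x : ℝ | ∃ (k : ℕ) (A : Fin k → Set ℕ),
      (∀ j j', j ≠ j' → Disjoint (A j) (A j')) ∧ (⋃ j, A j) = Set.univ ∧
      x = ∑ j, ν (A j) * sInf (a i '' A j)} := fun i => rfl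
  have hbddA : ∀ i : Fin istar, BddAbove {x : ℝ | ∃ (k : ℕ) (A : Fin k → Set ℕ),
      (∀ j j', j ≠ j' → Disjoint (A j) (A j')) ∧ (⋃ j, A j) = Set.univ ∧
      x = ∑ j, ν (A j) * sInf (a i '' A j)} :=
    fun i => ⟨L i + 1/K, fun x hx => hub i x hx⟩
  have hLb : ∀ i, L i ≤ b i := by
    intro i
    rw [← hAv i, hAvset i]
    exact le_csSup (hbddA i) (hmem i)
  have hbub : ∀ i, b i ≤ L i + 1/K := by
    intro i
    rw [← hAv i, hAvset i]
    exact csSup_le ⟨L i, hmem i⟩ (fun x hx => hub i x hx)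
  have hL0 : ∀ i, 0 ≤ L i :=
    fun i => Finset.sum_nonneg (fun f _ => mul_nonneg (hνnn _) (hinf0 i _))
  have hL1 : ∀ i, L i ≤ 1 := by
    intro i
    calc L i ≤ ∑ f : Fin istar → Fin K, ν (C f) * 1 :=
        Finset.sum_le_sum (fun f _ => mul_le_mul_of_nonneg_left (hinf1 i _) (hνnn _))
    _ = 1 := by simp_rw [mul_one]; exact hsum1
  -- positive cells
  set P : Finset (Fin istar → Fin K) := Finset.univ.filter (fun f => 0 < ν (C f)) with hPdef
  have hνoff : ∀ f, f ∉ P → ν (C f) = 0 := by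
    intro f hf
    rw [hPdef, Finset.mem_filter] at hf
    push_neg at hf
    exact le_antisymm (hf (Finset.mem_univ f)) (hνnn _)
  have hPsum : ∑ f ∈ P, ν (C f) = 1 := by
    rw [← hsum1]
    exact Finset.sum_subset (Finset.subset_univ P) (fun f _ hf => hνoff f hf)
  have hLP : ∀ i, L i = ∑ f ∈ P, ν (C f) * sInf (a i '' C f) := by
    intro i
    rw [hLdef]
    exact (Finset.sum_subset (Finset.subset_univ P)
      (fun f _ hf => by rw [hνoff f hf, zero_mul])).symm
  have hPne : P.Nonempty := by
    by_contra h
    rw [Finset.not_nonempty_iff_eq_empty] at h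
    rw [h, Finset.sum_empty] at hPsum
    norm_num at hPsum
  set M : ℕ := P.card with hMdef
  have hM1 : 0 < M := Finset.card_pos.mpr hPne
  have hMR : (0:ℝ) < M := by exact_mod_cast hM1
  obtain ⟨N, hNR, hNM⟩ : ∃ N : ℕ, (0:ℝ) < N ∧ 2*(M:ℝ)/N < ε/2 := by
    obtain ⟨N, hN⟩ := exists_nat_gt (4*(M:ℝ)/ε)
    have hN0 : (0:ℝ) < N := lt_of_le_of_lt (div_nonneg (by linarith) hε.le) hN
    refine ⟨N, hN0, ?_⟩
    rw [div_lt_iff₀ hN0]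
    rw [div_lt_iff₀ hε] at hN
    nlinarith
  -- each positive cell has infinitely many usable points
  have hΞmono : ∀ {X Y : Set ℕ}, X ⊆ Y → Ξ X ≤ Ξ Y := fun h => fa_mono Ξ hΞnn hadd h
  have hΞfin : ∀ s : Finset ℕ, Ξ ↑s = 0 := fa_fin Ξ h0 hadd hsing
  have hsubadd : ∀ X Y : Set ℕ, Ξ (X ∪ Y) ≤ Ξ X + Ξ Y := by
    intro X Y
    have h' := hadd X (Y \ X) disjoint_sdiff_self_right
    rw [Set.union_diff_self] at h'
    have h'' : Ξ (Y \ X) ≤ Ξ Y := hΞmono Set.diff_subset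
    linarith
  have hDinf : ∀ f ∈ P, ((B ∩ C f) \ {x | x < mstar}).Infinite := by
    intro f hf
    rw [hPdef, Finset.mem_filter] at hf
    have hpos : 0 < Ξ (B ∩ C f) := by
      by_contra h
      push_neg at h
      have : ν (C f) ≤ 0 := div_nonpos_of_nonpos_of_nonneg h hB.le
      linarith [hf.2]
    by_contra h
    rw [Set.not_infinite] at h
    have hsub : B ∩ C f ⊆ (((B ∩ C f) \ {x | x < mstar}) ∪ ↑(Finset.range mstar)) := by
      intro x hx
      by_cases hxm : x < mstar
      · right; simpa using hxm
      · left; exact ⟨hx, hxm⟩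
    have hle := hΞmono hsub
    have h2 := hsubadd ((B ∩ C f) \ {x | x < mstar}) ↑(Finset.range mstar)
    have h3 : Ξ ((B ∩ C f) \ {x | x < mstar}) = 0 := by
      have := hΞfin h.toFinset
      rwa [Set.Finite.coe_toFinset] at this
    have h4 : Ξ (↑(Finset.range mstar) : Set ℕ) = 0 := hΞfin _
    linarith
  -- choose the sample points
  set p : (Fin istar → Fin K) → ℕ := fun f => ⌈(N:ℝ) * ν (C f)⌉₊ with hpdef
  have hchoice : ∀ f, ∃ t : Finset ℕ, ↑t ⊆ ((B ∩ C f) \ {x | x < mstar}) ∧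
      t.card = if f ∈ P then p f else 0 := by
    intro f
    by_cases hf : f ∈ P
    · obtain ⟨t, ht1, ht2⟩ := (hDinf f hf).exists_subset_card_eq (p f)
      exact ⟨t, ht1, by simp [hf, ht2]⟩
    · exact ⟨∅, by simp, by simp [hf]⟩
  choose t ht htc using hchoice
  set u : Finset ℕ := P.biUnion t with hudef
  have htC : ∀ f, ∀ x ∈ t f, x ∈ C f := fun f x hx => ((ht f (Finset.mem_coe.mpr hx)).1).2
  have htdisj : ∀ f ∈ P, ∀ g ∈ P, f ≠ g → Disjoint (t f) (t g) := by
    intro f _ g _ hfg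
    rw [Finset.disjoint_left]
    intro x hxf hxg
    exact (Set.disjoint_left.mp (hCdisj f g hfg)) (htC f x hxf) (htC g x hxg)
  have hucard : u.card = ∑ f ∈ P, p f := by
    rw [hudef, Finset.card_biUnion htdisj]
    exact Finset.sum_congr rfl (fun f hf => by rw [htc f, if_pos hf])
  have husum : ∀ i : Fin istar, ∑ ℓ ∈ u, a i ℓ = ∑ f ∈ P, ∑ ℓ ∈ t f, a i ℓ := by
    intro i
    rw [hudef]
    exact Finset.sum_biUnion htdisj
  have hpedge : ∀ f ∈ P, (N:ℝ) * ν (C f) ≤ p f ∧ (p f : ℝ) ≤ (N:ℝ) * ν (C f) + 1 := by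
    intro f _
    refine ⟨Nat.le_ceil _, ?_⟩
    have := Nat.ceil_lt_add_one (mul_nonneg hNR.le (hνnn (C f)))
    rw [hpdef]
    linarith
  have hcard_lb : (N:ℝ) ≤ u.card := by
    rw [hucard]
    push_cast
    calc (N:ℝ) = ∑ f ∈ P, (N:ℝ) * ν (C f) := by rw [← Finset.mul_sum, hPsum, mul_one]
    _ ≤ ∑ f ∈ P, (p f : ℝ) := Finset.sum_le_sum (fun f hf => (hpedge f hf).1)
  have hcard_ub : (u.card : ℝ) ≤ (N:ℝ) + M := by
    rw [hucard]
    push_cast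
    calc ∑ f ∈ P, (p f : ℝ) ≤ ∑ f ∈ P, ((N:ℝ) * ν (C f) + 1) :=
        Finset.sum_le_sum (fun f hf => (hpedge f hf).2)
    _ = (N:ℝ) * (∑ f ∈ P, ν (C f)) + M := by
        rw [Finset.sum_add_distrib, ← Finset.mul_sum, Finset.sum_const, hMdef]
        simp [nsmul_eq_mul]
    _ = (N:ℝ) + M := by rw [hPsum]; ring
  have hune : u.Nonempty := by
    rw [← Finset.card_pos, hucard]
    obtain ⟨f, hf⟩ := hPne
    have hfpos : 0 < ν (C f) := by
      have hf' := hf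
      rw [hPdef, Finset.mem_filter] at hf'
      exact hf'.2
    have hppos : 0 < p f := by
      rw [hpdef]
      exact Nat.ceil_pos.mpr (mul_pos hNR hfpos)
    exact Finset.sum_pos' (fun g _ => Nat.zero_le _) ⟨f, hf, hppos⟩
  have humem : ∀ x ∈ u, x ∈ B ∧ mstar ≤ x := by
    intro x hx
    rw [hudef, Finset.mem_biUnion] at hx
    obtain ⟨f, hfP, hxf⟩ := hx
    have h' := ht f (Finset.mem_coe.mpr hxf)
    exact ⟨h'.1.1, not_lt.mp h'.2⟩
  have hcell_lb : ∀ (i : Fin istar), ∀ f ∈ P, (p f : ℝ) * sInf (a i '' C f) ≤ ∑ ℓ ∈ t f, a i ℓ := by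
    intro i f hf
    have h' := Finset.card_nsmul_le_sum (t f) (a i) (sInf (a i '' C f))
      (fun ℓ hℓ => hinfle i (C f) ℓ (htC f ℓ hℓ))
    rwa [htc f, if_pos hf, nsmul_eq_mul] at h'
  have hcell_ub : ∀ (i : Fin istar), ∀ f ∈ P, ∑ ℓ ∈ t f, a i ℓ ≤ (p f : ℝ) * (sInf (a i '' C f) + 1/K) := by
    intro i f hf
    have h' := Finset.sum_le_card_nsmul (t f) (a i) (sInf (a i '' C f) + 1/K)
      (fun ℓ hℓ => hcellub f i ℓ (htC f ℓ hℓ))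
    rwa [htc f, if_pos hf, nsmul_eq_mul] at h'
  clear_value u p M P L
  refine ⟨u, hune, humem, fun i => ?_⟩
  have hc0 : (0:ℝ) < u.card := lt_of_lt_of_le hNR hcard_lb
  have hSlb : (N:ℝ) * L i ≤ ∑ ℓ ∈ u, a i ℓ := by
    rw [husum i, hLP i, Finset.mul_sum]
    apply Finset.sum_le_sum
    intro f hf
    calc (N:ℝ) * (ν (C f) * sInf (a i '' C f)) = ((N:ℝ) * ν (C f)) * sInf (a i '' C f) := by ring
    _ ≤ (p f : ℝ) * sInf (a i '' C f) := mul_le_mul_of_nonneg_right (hpedge f hf).1 (hinf0 i _)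
    _ ≤ ∑ ℓ ∈ t f, a i ℓ := hcell_lb i f hf
  have hSub : ∑ ℓ ∈ u, a i ℓ ≤ (N:ℝ) * (L i + 1/K) + 2*M := by
    rw [husum i]
    have hK1 : 1/(K:ℝ) ≤ 1 := by
      rw [div_le_one hKR]
      exact_mod_cast hK0
    calc ∑ f ∈ P, ∑ ℓ ∈ t f, a i ℓ
        ≤ ∑ f ∈ P, ((N:ℝ) * ν (C f) + 1) * (sInf (a i '' C f) + 1/K) := by
          apply Finset.sum_le_sum
          intro f hf
          refine (hcell_ub i f hf).trans (mul_le_mul_of_nonneg_right (hpedge f hf).2 ?_)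
          have := hinf0 i (C f)
          positivity
    _ = (N:ℝ) * (∑ f ∈ P, ν (C f) * (sInf (a i '' C f) + 1/K))
          + ∑ f ∈ P, (sInf (a i '' C f) + 1/K) := by
        rw [Finset.mul_sum, ← Finset.sum_add_distrib]
        exact Finset.sum_congr rfl (fun f _ => by ring)
    _ ≤ (N:ℝ) * (L i + 1/K) + 2*M := by
        have e1 : ∑ f ∈ P, ν (C f) * (sInf (a i '' C f) + 1/K) = L i + 1/K := by
          simp_rw [mul_add]
          rw [Finset.sum_add_distrib, ← hLP i, ← Finset.sum_mul, hPsum, one_mul]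
        have e2 : ∑ f ∈ P, (sInf (a i '' C f) + 1/K) ≤ 2*M := by
          have e3 : ∑ f ∈ P, (sInf (a i '' C f) + 1/K) ≤ ∑ _f ∈ P, (2:ℝ) := by
            apply Finset.sum_le_sum
            intro f _
            have h1 := hinf1 i (C f)
            linarith
          have e4 : ∑ _f ∈ P, (2:ℝ) = 2*M := by
            rw [Finset.sum_const, hMdef, nsmul_eq_mul]; ring
          linarith
        rw [e1]
        linarith
  have hS0 : 0 ≤ ∑ ℓ ∈ u, a i ℓ := le_trans (mul_nonneg hNR.le (hL0 i)) hSlb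
  constructor
  · have key : (N:ℝ) * L i / ((N:ℝ) + M) ≤ (∑ ℓ ∈ u, a i ℓ) / u.card :=
      div_le_div₀ hS0 hSlb hc0 hcard_ub
    have h1 : L i - M/N ≤ (N:ℝ) * L i / ((N:ℝ) + M) := by
      rw [le_div_iff₀ (add_pos hNR hMR)]
      have hq : (M:ℝ)/N * N = M := div_mul_cancel₀ _ (ne_of_gt hNR)
      have hq0 : 0 ≤ (M:ℝ)/N := div_nonneg hMR.le hNR.le
      have e1 : (L i - (M:ℝ)/N) * ((N:ℝ) + M)
          = L i * N + L i * M - ((M:ℝ)/N * N) - ((M:ℝ)/N)*M := by ring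
      rw [e1, hq]
      have f1 : L i * M ≤ M := mul_le_of_le_one_left hMR.le (hL1 i)
      have f2 : 0 ≤ (M:ℝ)/N * M := mul_nonneg hq0 hMR.le
      linarith only [f1, f2]
    have h2 : (M:ℝ)/N ≤ 2*M/N := by
      have e2 : 2*(M:ℝ)/N = (M:ℝ)/N + (M:ℝ)/N := by ring
      have hq0 : 0 ≤ (M:ℝ)/N := div_nonneg hMR.le hNR.le
      linarith only [e2, hq0]
    linarith only [key, h1, h2, hbub i, hKε, hNM]
  · have key : (∑ ℓ ∈ u, a i ℓ) / u.card ≤ (∑ ℓ ∈ u, a i ℓ) / N :=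
      div_le_div_of_nonneg_left hS0 hNR hcard_lb
    have h4 : (∑ ℓ ∈ u, a i ℓ) / N ≤ L i + 1/K + 2*M/N := by
      rw [div_le_iff₀ hNR]
      have e1 : (L i + 1/K + 2*(M:ℝ)/N) * N = (L i + 1/K) * N + (2*(M:ℝ)/N) * N := by ring
      have e2 : (2*(M:ℝ)/N) * N = 2*M := div_mul_cancel₀ _ (ne_of_gt hNR)
      rw [e1, e2]
      linarith only [hSub]
    linarith only [key, h4, hLb i, hKε, hNM]
end

section
/- Let Ξ be a partial finitely additive measure on ω, ā^α = ⟨a^α_k : k ∈ ω⟩ sequences of reals with limsup_k |a^α_k| < ∞ for α < α*, and b_α reals. Suppose: for every partition ⟨B₀,…,B_{m*−1}⟩ of ω with B_m ∈ dom(Ξ), every ε > 0, every k* > 0, and all α₀ < … < α_{n−1} < α*, there is a finite u ⊆ ω ∖ k* with (i) Ξ(B_m) − ε < |B_m ∩ u|/|u| < Ξ(B_m) + ε for each m, and (ii) (1/|u|)·Σ_{k ∈ u} a^{α_ℓ}_k > b_{α_ℓ} − ε for each ℓ < n. Then there is a full finitely additive measure Ξ* ⊇ Ξ on P(ω) with Av_{Ξ*}(ā^α)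 ≥ b_α for all α < α*. -/
universe u

noncomputable def nuA (u : Finset ℕ) (A : Set ℕ) : ℝ := ((A ∩ ↑u).ncard : ℝ) / u.card

lemma nuA_filter (u : Finset ℕ) (A : Set ℕ) [DecidablePred (· ∈ A)] :
    nuA u A = ((u.filter (· ∈ A)).card : ℝ) / u.card := by
  have : A ∩ ↑u = ↑(u.filter (· ∈ A)) := by
    ext x; simp [Finset.coe_filter, and_comm]
  rw [nuA, this, Set.ncard_coe_finset]

lemma nuA_mem_Icc (u : Finset ℕ) (hu : u.Nonempty) (A : Set ℕ) :
    nuA u A ∈ Set.Icc (0 : ℝ) 1 := by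
  have hc : (0 : ℝ) < u.card := by exact_mod_cast Finset.card_pos.mpr hu
  constructor
  · exact div_nonneg (by positivity) hc.le
  · rw [nuA, div_le_one hc]
    have : (A ∩ ↑u).ncard ≤ (↑u : Set ℕ).ncard :=
      Set.ncard_le_ncard Set.inter_subset_right (u.finite_toSet)
    rw [Set.ncard_coe_finset] at this
    exact_mod_cast this

lemma nuA_empty (u : Finset ℕ) : nuA u ∅ = 0 := by simp [nuA]

lemma nuA_univ (u : Finset ℕ) (hu : u.Nonempty) : nuA u Set.univ = 1 := by
  have hc : (0 : ℝ) < u.card := by exact_mod_cast Finset.card_pos.mpr hu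
  rw [nuA, Set.univ_inter, Set.ncard_coe_finset, div_self hc.ne']

lemma nuA_add (u : Finset ℕ) (A B : Set ℕ) (h : Disjoint A B) :
    nuA u (A ∪ B) = nuA u A + nuA u B := by
  have h1 : (A ∪ B) ∩ ↑u = (A ∩ ↑u) ∪ (B ∩ ↑u) := Set.union_inter_distrib_right A B _
  have h2 : ((A ∩ ↑u) ∪ (B ∩ ↑u)).ncard = (A ∩ ↑u).ncard + (B ∩ ↑u).ncard :=
    Set.ncard_union_eq (h.mono Set.inter_subset_left Set.inter_subset_left)
      (u.finite_toSet.subset Set.inter_subset_right)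
      (u.finite_toSet.subset Set.inter_subset_right)
  rw [nuA, nuA, nuA, h1, h2]
  push_cast
  rw [add_div]

section aux
variable {ι : Type*}

lemma aux_union_mem (P : Set (Set ℕ)) (hempty : ∅ ∈ P)
    (hPunion : ∀ A ∈ P, ∀ B ∈ P, A ∪ B ∈ P) (t : Finset ι) (g : ι → Set ℕ)
    (hg : ∀ i ∈ t, g i ∈ P) : (⋃ i ∈ t, g i) ∈ P := by
  classical
  induction t using Finset.induction with
  | empty => simpa using hempty
  | @insert a t ha ih =>
    rw [Finset.set_biUnion_insert]
    exact hPunion _ (hg a (Finset.mem_insert_self a t)) _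
      (ih fun i hi => hg i (Finset.mem_insert_of_mem hi))

lemma aux_sum_additive (P : Set (Set ℕ)) (hempty : ∅ ∈ P)
    (hPunion : ∀ A ∈ P, ∀ B ∈ P, A ∪ B ∈ P) (μ : Set ℕ → ℝ) (hμ0 : μ ∅ = 0)
    (hμadd : ∀ A ∈ P, ∀ B ∈ P, Disjoint A B → μ (A ∪ B) = μ A + μ B)
    (t : Finset ι) (g : ι → Set ℕ) (hg : ∀ i ∈ t, g i ∈ P)
    (hdisj : ∀ i ∈ t, ∀ j ∈ t, i ≠ j → Disjoint (g i) (g j)) :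
    μ (⋃ i ∈ t, g i) = ∑ i ∈ t, μ (g i) := by
  classical
  induction t using Finset.induction with
  | empty => simpa using hμ0
  | @insert a t ha ih =>
    rw [Finset.set_biUnion_insert, Finset.sum_insert ha]
    have h1 : g a ∈ P := hg a (Finset.mem_insert_self a t)
    have h2 : (⋃ i ∈ t, g i) ∈ P :=
      aux_union_mem P hempty hPunion t g fun i hi => hg i (Finset.mem_insert_of_mem hi)
    have hd : Disjoint (g a) (⋃ i ∈ t, g i) := by
      refine Set.disjoint_iUnion₂_right.mpr fun i hi => ?_
      exact hdisj a (Finset.mem_insert_self a t) i (Finset.mem_insert_of_mem hi)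
        (by rintro rfl; exact ha hi)
    rw [hμadd _ h1 _ h2 hd,
      ih (fun i hi => hg i (Finset.mem_insert_of_mem hi))
        (fun i hi j hj hij => hdisj i (Finset.mem_insert_of_mem hi) j
          (Finset.mem_insert_of_mem hj) hij)]

lemma aux_inter_mem (P : Set (Set ℕ)) (hPfin : ∀ A : Set ℕ, A.Finite → A ∈ P)
    (hPcompl : ∀ A ∈ P, Aᶜ ∈ P)
    (hPunion : ∀ A ∈ P, ∀ B ∈ P, A ∪ B ∈ P) [Fintype ι] (g : ι → Set ℕ)
    (hg : ∀ i, g i ∈ P) : (⋂ i, g i) ∈ P := by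
  have h := aux_union_mem P (hPfin ∅ (Set.finite_empty)) hPunion Finset.univ
    (fun i => (g i)ᶜ) (fun i _ => hPcompl _ (hg i))
  have : (⋂ i, g i) = (⋃ i ∈ Finset.univ, (g i)ᶜ)ᶜ := by
    simp [Set.compl_iUnion]
  rw [this]
  exact hPcompl _ h

end aux

lemma aux_fip (P : Set (Set ℕ))
    (hPfin : ∀ A : Set ℕ, A.Finite → A ∈ P)
    (hPcompl : ∀ A ∈ P, Aᶜ ∈ P)
    (hPunion : ∀ A ∈ P, ∀ B ∈ P, A ∪ B ∈ P)
    (Ξ : Set ℕ → ℝ) (h0 : Ξ ∅ = 0)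
    (hadd : ∀ A ∈ P, ∀ B ∈ P, Disjoint A B → Ξ (A ∪ B) = Ξ A + Ξ B)
    (αstar : Ordinal.{u}) (a : Ordinal.{u} → ℕ → ℝ) (b : Ordinal.{u} → ℝ)
    (HB : ∀ (m : ℕ) (Bs : Fin m → Set ℕ),
        (∀ i, Bs i ∈ P) →
        (∀ i j, i ≠ j → Disjoint (Bs i) (Bs j)) →
        (⋃ i, Bs i) = Set.univ →
        ∀ ε : ℝ, 0 < ε → ∀ kstar : ℕ, 0 < kstar →
          ∀ s : Finset Ordinal.{u}, (∀ α ∈ s, α < αstar) →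
            ∃ u : Finset ℕ, u.Nonempty ∧ (∀ x ∈ u, kstar ≤ x) ∧
              (∀ i : Fin m,
                Ξ (Bs i) - ε < ((Bs i ∩ ↑u).ncard : ℝ) / u.card ∧
                ((Bs i ∩ ↑u).ncard : ℝ) / u.card < Ξ (Bs i) + ε) ∧
              (∀ α ∈ s, b α - ε < (∑ k ∈ u, a α k) / u.card))
    (E : Finset (Set ℕ)) (ε : ℝ) (hε : 0 < ε) (k₀ : ℕ) (s : Finset Ordinal.{u}) :
    ∃ u : Finset ℕ, u.Nonempty ∧
      (∀ A ∈ E, A ∈ P → |nuA u A - Ξ A| < ε) ∧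
      (∀ x ∈ u, k₀ ≤ x) ∧
      (∀ α ∈ s, α < αstar → b α - ε < (∑ k ∈ u, a α k) / u.card) := by
  classical
  set E' : Finset (Set ℕ) := E.filter (· ∈ P) with hE'
  set ι := ({A // A ∈ E'} → Bool)
  set m := Fintype.card ι with hm
  set e : ι ≃ Fin m := Fintype.equivFin ι with he
  set atom : ι → Set ℕ :=
    fun f => ⋂ A : {A // A ∈ E'}, if f A then (A : Set ℕ) else (↑A)ᶜ with hatom
  have hmemP : ∀ A ∈ E', A ∈ P := fun A hA => (Finset.mem_filter.mp hA).2
  have hatomP : ∀ f, atom f ∈ P := by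
    intro f
    refine aux_inter_mem P hPfin hPcompl hPunion _ fun A => ?_
    cases h : f A
    · rw [if_neg Bool.false_ne_true]
      exact hPcompl _ (hmemP A A.2)
    · rw [if_pos rfl]
      exact hmemP A A.2
  have hatomdisj : ∀ f g : ι, f ≠ g → Disjoint (atom f) (atom g) := by
    intro f g hfg
    obtain ⟨A, hA⟩ := Function.ne_iff.mp hfg
    rw [Set.disjoint_left]
    intro x hxf hxg
    have h1 := Set.mem_iInter.mp hxf A
    have h2 := Set.mem_iInter.mp hxg A
    cases hf : f A <;> cases hg : g A
    · exact hA (hf.trans hg.symm)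
    · rw [if_neg (by rw [hf]; exact Bool.false_ne_true)] at h1
      rw [if_pos hg] at h2
      exact h1 h2
    · rw [if_pos hf] at h1
      rw [if_neg (by rw [hg]; exact Bool.false_ne_true)] at h2
      exact h2 h1
    · exact hA (hf.trans hg.symm)
  have hcharmem : ∀ k : ℕ, k ∈ atom (fun A => decide (k ∈ (A : Set ℕ))) := by
    intro k
    refine Set.mem_iInter.mpr fun A => ?_
    by_cases h : k ∈ (A : Set ℕ) <;> simp [h]
  have hatomcover : (⋃ f, atom f) = Set.univ := by
    ext k; simp only [Set.mem_univ, iff_true, Set.mem_iUnion]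
    exact ⟨_, hcharmem k⟩
  -- decomposition of each A ∈ E' into atoms
  have hdecomp : ∀ A₀ (hA₀ : A₀ ∈ E'),
      A₀ = ⋃ f ∈ Finset.univ.filter (fun f : ι => f ⟨A₀, hA₀⟩ = true), atom f := by
    intro A₀ hA₀
    ext k
    simp only [Set.mem_iUnion, Finset.mem_filter, Finset.mem_univ, true_and,
      exists_prop]
    constructor
    · intro hk
      refine ⟨fun A => decide (k ∈ (A : Set ℕ)), by simpa using hk, hcharmem k⟩
    · rintro ⟨f, hf, hkf⟩
      have := Set.mem_iInter.mp hkf ⟨A₀, hA₀⟩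
      simpa [hf] using this
  -- apply HB
  have hε' : (0 : ℝ) < ε / (m + 1) := by positivity
  obtain ⟨u, hune, hularge, hunu, huavg⟩ :=
    HB m (fun i => atom (e.symm i)) (fun i => hatomP _)
      (fun i j hij => hatomdisj _ _ (fun h => hij (by
        have := congrArg e h; simpa using this)))
      (by rw [← hatomcover]
          ext x
          simp only [Set.mem_iUnion]
          exact ⟨fun ⟨i, hi⟩ => ⟨e.symm i, hi⟩,
            fun ⟨f, hf⟩ => ⟨e f, by rw [Equiv.symm_apply_apply]; exact hf⟩⟩)
      (ε / (m + 1)) hε' (max k₀ 1) (lt_of_lt_of_le one_pos (le_max_right _ _))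
      (s.filter (· < αstar)) (fun α hα => (Finset.mem_filter.mp hα).2)
  refine ⟨u, hune, ?_, fun x hx => le_trans (le_max_left _ _) (hularge x hx), ?_⟩
  · -- the measure approximation clause
    intro A₀ hA₀E hA₀P
    have hA₀ : A₀ ∈ E' := Finset.mem_filter.mpr ⟨hA₀E, hA₀P⟩
    set S := Finset.univ.filter (fun f : ι => f ⟨A₀, hA₀⟩ = true) with hS
    have hXi : Ξ A₀ = ∑ f ∈ S, Ξ (atom f) := by
      rw [hdecomp A₀ hA₀]
      exact aux_sum_additive P (hPfin ∅ Set.finite_empty) hPunion Ξ h0 hadd S atom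
        (fun f _ => hatomP f) (fun f _ g _ hfg => hatomdisj f g hfg)
    have hnu : nuA u A₀ = ∑ f ∈ S, nuA u (atom f) := by
      conv_lhs => rw [hdecomp A₀ hA₀]
      exact aux_sum_additive Set.univ trivial (fun _ _ _ _ => trivial) (nuA u)
        (by simp [nuA]) (fun A _ B _ h => by
          have h1 : (A ∪ B) ∩ ↑u = (A ∩ ↑u) ∪ (B ∩ ↑u) := Set.union_inter_distrib_right A B _
          have h2 : ((A ∩ ↑u) ∪ (B ∩ ↑u)).ncard = (A ∩ ↑u).ncard + (B ∩ ↑u).ncard :=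
            Set.ncard_union_eq (h.mono Set.inter_subset_left Set.inter_subset_left)
              (u.finite_toSet.subset Set.inter_subset_right)
              (u.finite_toSet.subset Set.inter_subset_right)
          simp only [nuA, h1, h2]
          push_cast
          rw [add_div]) S atom
        (fun f _ => trivial) (fun f _ g _ hfg => hatomdisj f g hfg)
    have hterm : ∀ f : ι, |nuA u (atom f) - Ξ (atom f)| < ε / (m + 1) := by
      intro f
      have := hunu (e f)
      simp only [Equiv.symm_apply_apply] at this
      rw [abs_sub_lt_iff]
      simp only [nuA]
      exact ⟨by linarith [this.1, this.2], by linarith [this.1, this.2]⟩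
    calc |nuA u A₀ - Ξ A₀| = |∑ f ∈ S, (nuA u (atom f) - Ξ (atom f))| := by
          rw [hXi, hnu, Finset.sum_sub_distrib]
      _ ≤ ∑ f ∈ S, |nuA u (atom f) - Ξ (atom f)| := Finset.abs_sum_le_sum_abs _ _
      _ ≤ ∑ f : ι, |nuA u (atom f) - Ξ (atom f)| :=
          Finset.sum_le_sum_of_subset_of_nonneg (Finset.filter_subset _ _)
            (fun _ _ _ => abs_nonneg _)
      _ < ∑ f : ι, ε / (m + 1) := by
          refine Finset.sum_lt_sum_of_nonempty Finset.univ_nonempty fun f _ => hterm f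
      _ = m * (ε / (m + 1)) := by
          rw [Finset.sum_const, Finset.card_univ, ← hm, nsmul_eq_mul]
      _ < ε := by
          have hmnn : (0:ℝ) ≤ (m:ℝ) := Nat.cast_nonneg m
          have heq : (m:ℝ) * (ε / (m+1)) = ((m:ℝ) * ε) / ((m:ℝ)+1) := by ring
          rw [heq, div_lt_iff₀ (by linarith)]
          nlinarith
  · intro α hαs hα
    have := huavg α (Finset.mem_filter.mpr ⟨hαs, hα⟩)
    have hle : ε / (m + 1) ≤ ε := by
      have hmnn : (0:ℝ) ≤ (m:ℝ) := Nat.cast_nonneg m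
      exact div_le_self hε.le (by linarith)
    linarith

/-- Fact 3.6, (B) ⇒ (A): under the finite-approximation condition (B), a partial
finitely additive measure `Ξ` extends to a full finitely additive measure `Ξ*` with
`Av_{Ξ*}(ā^α) ≥ b_α` for all `α < α*`. -/
theorem stmt8 (P : Set (Set ℕ))
    (hPfin : ∀ A : Set ℕ, A.Finite → A ∈ P)
    (hPcompl : ∀ A ∈ P, Aᶜ ∈ P)
    (hPunion : ∀ A ∈ P, ∀ B ∈ P, A ∪ B ∈ P)
    (Ξ : Set ℕ → ℝ)
    (hrange : ∀ A ∈ P, Ξ A ∈ Set.Icc (0 : ℝ) 1)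
    (h0 : Ξ ∅ = 0) (h1 : Ξ Set.univ = 1)
    (hadd : ∀ A ∈ P, ∀ B ∈ P, Disjoint A B → Ξ (A ∪ B) = Ξ A + Ξ B)
    (hsing : ∀ n : ℕ, Ξ {n} = 0)
    (αstar : Ordinal.{u}) (a : Ordinal.{u} → ℕ → ℝ) (b : Ordinal.{u} → ℝ)
    (hbd : ∀ α < αstar, ∃ C : ℝ, ∀ᶠ k in Filter.atTop, |a α k| ≤ C)
    -- condition (B):
    (HB : ∀ (m : ℕ) (Bs : Fin m → Set ℕ),
        (∀ i, Bs i ∈ P) →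
        (∀ i j, i ≠ j → Disjoint (Bs i) (Bs j)) →
        (⋃ i, Bs i) = Set.univ →
        ∀ ε : ℝ, 0 < ε → ∀ kstar : ℕ, 0 < kstar →
          ∀ s : Finset Ordinal.{u}, (∀ α ∈ s, α < αstar) →
            ∃ u : Finset ℕ, u.Nonempty ∧ (∀ x ∈ u, kstar ≤ x) ∧
              (∀ i : Fin m,
                Ξ (Bs i) - ε < ((Bs i ∩ ↑u).ncard : ℝ) / u.card ∧
                ((Bs i ∩ ↑u).ncard : ℝ) / u.card < Ξ (Bs i) + ε) ∧
              (∀ α ∈ s, b α - ε < (∑ k ∈ u, a α k) / u.card)) :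
    -- conclusion (A):
    ∃ Ξs : Set ℕ → ℝ,
      (∀ A ∈ P, Ξs A = Ξ A) ∧
      (∀ A : Set ℕ, Ξs A ∈ Set.Icc (0 : ℝ) 1) ∧
      Ξs ∅ = 0 ∧ Ξs Set.univ = 1 ∧
      (∀ A B : Set ℕ, Disjoint A B → Ξs (A ∪ B) = Ξs A + Ξs B) ∧
      (∀ n : ℕ, Ξs {n} = 0) ∧
      (∀ α < αstar, b α ≤ Av Ξs (a α)) := by

  classical
  -- the index type of finite "samples"
  let J := {v : Finset ℕ // v.Nonempty}
  -- the type of conditions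
  let C := Finset (Set ℕ) × {e : ℝ // 0 < e} × ℕ × Finset Ordinal.{u}
  let T : C → Set J := fun c =>
    {v | (∀ A ∈ c.1, A ∈ P → |nuA v.1 A - Ξ A| < c.2.1.1) ∧
         (∀ x ∈ v.1, c.2.2.1 ≤ x) ∧
         (∀ α ∈ c.2.2.2, α < αstar → b α - c.2.1.1 < (∑ k ∈ v.1, a α k) / v.1.card)}
  have hTne : ∀ c, (T c).Nonempty := by
    intro c
    obtain ⟨v, hvne, hv1, hv2, hv3⟩ := aux_fip P hPfin hPcompl hPunion Ξ h0 hadd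
      αstar a b HB c.1 c.2.1.1 c.2.1.2 c.2.2.1 c.2.2.2
    exact ⟨⟨v, hvne⟩, hv1, hv2, hv3⟩
  have hTdir : ∀ c₁ c₂ : C, ∃ c₃ : C, T c₃ ⊆ T c₁ ∧ T c₃ ⊆ T c₂ := by
    intro c₁ c₂
    refine ⟨(c₁.1 ∪ c₂.1, ⟨min c₁.2.1.1 c₂.2.1.1, lt_min c₁.2.1.2 c₂.2.1.2⟩,
      max c₁.2.2.1 c₂.2.2.1, c₁.2.2.2 ∪ c₂.2.2.2), ?_, ?_⟩
    · rintro v ⟨h1, h2, h3⟩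
      refine ⟨fun A hA hAP => lt_of_lt_of_le
          (h1 A (Finset.mem_union_left _ hA) hAP) (min_le_left _ _),
        fun x hx => le_trans (le_max_left _ _) (h2 x hx),
        fun α hα hαs => lt_of_le_of_lt (by
          have := min_le_left c₁.2.1.1 c₂.2.1.1; linarith)
          (h3 α (Finset.mem_union_left _ hα) hαs)⟩
    · rintro v ⟨h1, h2, h3⟩
      refine ⟨fun A hA hAP => lt_of_lt_of_le
          (h1 A (Finset.mem_union_right _ hA) hAP) (min_le_right _ _),
        fun x hx => le_trans (le_max_right _ _) (h2 x hx),
        fun α hα hαs => lt_of_le_of_lt (by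
          have := min_le_right c₁.2.1.1 c₂.2.1.1; linarith)
          (h3 α (Finset.mem_union_right _ hα) hαs)⟩
  haveI : Nonempty J := ⟨⟨{0}, Finset.singleton_nonempty 0⟩⟩
  haveI : Nonempty C := ⟨(∅, ⟨1, one_pos⟩, 0, ∅)⟩
  have hdir : Directed (· ≥ ·) (fun c => Filter.principal (T c)) := by
    intro c₁ c₂
    obtain ⟨c₃, h1, h2⟩ := hTdir c₁ c₂
    exact ⟨c₃, Filter.principal_mono.mpr h1, Filter.principal_mono.mpr h2⟩
  haveI hNB : (⨅ c, Filter.principal (T c)).NeBot :=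
    Filter.iInf_neBot_of_directed hdir fun c => Filter.principal_neBot_iff.mpr (hTne c)
  let U : Ultrafilter J := Ultrafilter.of (⨅ c, Filter.principal (T c))
  have hUT : ∀ c : C, T c ∈ U := fun c =>
    Ultrafilter.of_le _ (Filter.mem_iInf_of_mem c (Filter.mem_principal_self _))
  -- the limit measure
  have hexlim : ∀ A : Set ℕ, ∃ x ∈ Set.Icc (0:ℝ) 1,
      Filter.Tendsto (fun v : J => nuA v.1 A) ↑U (nhds x) := by
    intro A
    have hmap : ↑(U.map (fun v : J => nuA v.1 A)) ≤ Filter.principal (Set.Icc (0:ℝ) 1) := by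
      rw [Ultrafilter.coe_map]
      refine Filter.le_principal_iff.mpr (Filter.mem_map.mpr ?_)
      exact Filter.univ_mem' (fun v => nuA_mem_Icc v.1 v.2 A)
    obtain ⟨x, hx, hle⟩ := isCompact_Icc.ultrafilter_le_nhds (U.map _) hmap
    refine ⟨x, hx, ?_⟩
    rwa [Ultrafilter.coe_map] at hle
  choose Ξs hIcc hlim using hexlim
  -- basic properties
  have hempty : Ξs ∅ = 0 := by
    have h := hlim ∅
    have hfun : (fun v : J => nuA v.1 (∅ : Set ℕ)) = fun _ => (0:ℝ) :=
      funext fun v => nuA_empty v.1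
    rw [hfun] at h
    exact tendsto_nhds_unique h tendsto_const_nhds
  have huniv : Ξs Set.univ = 1 := by
    have h := hlim Set.univ
    have hfun : (fun v : J => nuA v.1 (Set.univ : Set ℕ)) = fun _ => (1:ℝ) :=
      funext fun v => nuA_univ v.1 v.2
    rw [hfun] at h
    exact tendsto_nhds_unique h tendsto_const_nhds
  have hAdd : ∀ A B : Set ℕ, Disjoint A B → Ξs (A ∪ B) = Ξs A + Ξs B := by
    intro A B hd
    have h3 := (hlim A).add (hlim B)
    have hfun : (fun v : J => nuA v.1 A + nuA v.1 B) = fun v : J => nuA v.1 (A ∪ B) :=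
      funext fun v => (nuA_add v.1 A B hd).symm
    rw [hfun] at h3
    exact tendsto_nhds_unique (hlim (A ∪ B)) h3
  have hsmall : ∀ K : ℕ, Ξs {k | k < K} = 0 := by
    intro K
    have hT := hUT (∅, ⟨1, one_pos⟩, K, ∅)
    have hev : (fun v : J => nuA v.1 {k | k < K}) =ᶠ[↑U] fun _ => (0:ℝ) := by
      filter_upwards [hT] with v hv
      have hint : {k | k < K} ∩ ↑v.1 = ∅ := by
        rw [Set.eq_empty_iff_forall_notMem]
        rintro x ⟨hx1, hx2⟩
        exact absurd (hv.2.1 x hx2) (not_le.mpr hx1)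
      simp [nuA, hint]
    exact tendsto_nhds_unique (hlim _) (Filter.Tendsto.congr' hev.symm tendsto_const_nhds)
  have hmono : ∀ A B : Set ℕ, A ⊆ B → Ξs A ≤ Ξs B := by
    intro A B hAB
    have hBd : B = A ∪ (B \ A) := (Set.union_diff_cancel hAB).symm
    have := hAdd A (B \ A) Set.disjoint_sdiff_right
    rw [← hBd] at this
    linarith [(hIcc (B \ A)).1]
  have hsings : ∀ n : ℕ, Ξs {n} = 0 := by
    intro n
    refine le_antisymm ?_ (hIcc {n}).1
    have h := hmono {n} {k | k < n + 1} (by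
      intro x hx
      rcases hx with rfl
      exact Nat.lt_succ_self _)
    rw [hsmall (n + 1)] at h
    exact h
  have hext : ∀ A ∈ P, Ξs A = Ξ A := by
    intro A hA
    have key : ∀ ε : ℝ, 0 < ε → |Ξs A - Ξ A| ≤ ε := by
      intro ε hε
      have hT := hUT ({A}, ⟨ε, hε⟩, 0, ∅)
      have h1 : Filter.Tendsto (fun v : J => |nuA v.1 A - Ξ A|) ↑U
          (nhds |Ξs A - Ξ A|) := ((hlim A).sub tendsto_const_nhds).abs
      refine le_of_tendsto h1 ?_
      filter_upwards [hT] with v hv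
      exact (hv.1 A (Finset.mem_singleton_self A) hA).le
    by_contra hne
    have hpos : 0 < |Ξs A - Ξ A| := abs_pos.mpr (sub_ne_zero.mpr hne)
    linarith [key (|Ξs A - Ξ A| / 2) (by linarith)]
  refine ⟨Ξs, hext, hIcc, hempty, huniv, hAdd, hsings, ?_⟩
  -- the average bound
  intro α hα
  obtain ⟨C0, hC0⟩ := hbd α hα
  obtain ⟨K, hK⟩ := Filter.eventually_atTop.mp hC0
  have hC0nn : 0 ≤ C0 := le_trans (abs_nonneg _) (hK K le_rfl)
  set M : ℝ := C0 + ∑ k ∈ Finset.range K, |a α k| with hM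
  have hsumnn : 0 ≤ ∑ j ∈ Finset.range K, |a α j| :=
    Finset.sum_nonneg fun j _ => abs_nonneg _
  have hMnn : 0 ≤ M := by rw [hM]; linarith
  have hMb : ∀ k, |a α k| ≤ M := by
    intro k
    rcases lt_or_ge k K with h | h
    · have h1 : |a α k| ≤ ∑ j ∈ Finset.range K, |a α j| :=
        Finset.single_le_sum (f := fun j => |a α j|) (fun j _ => abs_nonneg _) (Finset.mem_range.mpr h)
      rw [hM]; linarith
    · have := hK k h
      rw [hM]; linarith
  have hbdd_below : ∀ s : Set ℕ, BddBelow (a α '' s) := by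
    intro s
    refine ⟨-M, ?_⟩
    rintro y ⟨x, -, rfl⟩
    linarith [neg_abs_le (a α x), hMb x]
  have hsInf_le : ∀ s : Set ℕ, s.Nonempty → sInf (a α '' s) ≤ M := by
    rintro s ⟨x0, hx0⟩
    exact le_trans (csInf_le (hbdd_below s) ⟨x0, hx0, rfl⟩)
      (le_trans (le_abs_self _) (hMb x0))
  -- boundedness of the Av-set
  have hBdd : BddAbove {x : ℝ | ∃ (k : ℕ) (A : Fin k → Set ℕ),
      (∀ i j, i ≠ j → Disjoint (A i) (A j)) ∧ (⋃ i, A i) = Set.univ ∧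
      x = ∑ i, Ξs (A i) * sInf (a α '' A i)} := by
    refine ⟨M, ?_⟩
    rintro x ⟨k, A, hdisj, hcover, rfl⟩
    have hsum1 : ∑ i, Ξs (A i) = 1 := by
      have hs := aux_sum_additive Set.univ trivial (fun _ _ _ _ => trivial)
        Ξs hempty (fun A _ B _ hd => hAdd A B hd) Finset.univ A
        (fun _ _ => trivial) (fun i _ j _ hij => hdisj i j hij)
      have hcv : (⋃ i ∈ Finset.univ, A i) = Set.univ := by
        rw [← hcover]; simp
      rw [hcv, huniv] at hs
      exact hs.symm
    calc ∑ i, Ξs (A i) * sInf (a α '' A i) ≤ ∑ i, Ξs (A i) * M := by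
          refine Finset.sum_le_sum fun i _ => ?_
          rcases Set.eq_empty_or_nonempty (A i) with he | hne
          · rw [he, hempty]; simp
          · exact mul_le_mul_of_nonneg_left (hsInf_le _ hne) (hIcc (A i)).1
      _ = M := by rw [← Finset.sum_mul, hsum1, one_mul]
  -- main estimate: for every ε > 0, b α - 2ε ≤ Av Ξs (a α)
  have hmain : ∀ ε : ℝ, 0 < ε → b α - 2 * ε ≤ Av Ξs (a α) := by
    intro ε hε
    set N : ℕ := ⌈(2 * C0) / ε⌉₊ + 1 with hN
    have hNε : 2 * C0 < N * ε := by
      have h1 : (2 * C0) / ε ≤ (⌈(2 * C0) / ε⌉₊ : ℝ) := Nat.le_ceil _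
      have h2 : (2 * C0) / ε * ε = 2 * C0 := div_mul_cancel₀ _ hε.ne'
      have h3 : (N : ℝ) = (⌈(2 * C0) / ε⌉₊ : ℝ) + 1 := by rw [hN]; push_cast; ring
      nlinarith
    set B : Fin N → Set ℕ :=
      fun j => {k | K ≤ k ∧ a α k ∈ Set.Ico (-C0 + j * ε) (-C0 + (j + 1) * ε)} with hB
    have hBmem : ∀ k, K ≤ k → ∃ j : Fin N, k ∈ B j := by
      intro k hk
      have habs := abs_le.mp (hK k hk)
      set j0 : ℕ := ⌊(a α k + C0) / ε⌋₊ with hj0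
      have hnn : 0 ≤ (a α k + C0) / ε := div_nonneg (by linarith [habs.1]) hε.le
      have hjle : (j0 : ℝ) ≤ (a α k + C0) / ε := Nat.floor_le hnn
      have hjlt : (a α k + C0) / ε < j0 + 1 := Nat.lt_floor_add_one _
      have hmul1 : (j0 : ℝ) * ε ≤ a α k + C0 := by
        have := mul_le_mul_of_nonneg_right hjle hε.le
        rwa [div_mul_cancel₀ _ hε.ne'] at this
      have hmul2 : a α k + C0 < ((j0 : ℝ) + 1) * ε := by
        have := mul_lt_mul_of_pos_right hjlt hε
        rwa [div_mul_cancel₀ _ hε.ne'] at this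
      have hj0N : j0 < N := by
        by_contra hcon
        push_neg at hcon
        have hcast : (N : ℝ) ≤ (j0 : ℝ) := by exact_mod_cast hcon
        nlinarith [habs.2]
      refine ⟨⟨j0, hj0N⟩, hk, ?_, ?_⟩
      · simpa using (by linarith : -C0 + (j0 : ℝ) * ε ≤ a α k)
      · simpa using (by linarith : a α k < -C0 + ((j0 : ℝ) + 1) * ε)
    have hdisjB : ∀ (j j' : Fin N), j ≠ j' → Disjoint (B j) (B j') := by
      have haux : ∀ j j' : Fin N, (j : ℕ) < (j' : ℕ) → ∀ x, x ∈ B j → x ∉ B j' := by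
        intro j j' hlt x hx hx'
        obtain ⟨-, h1, h2⟩ := hx
        obtain ⟨-, h3, -⟩ := hx'
        have hle : ((j : ℕ) : ℝ) + 1 ≤ ((j' : ℕ) : ℝ) := by exact_mod_cast hlt
        have : ((j : ℕ) + 1 : ℝ) * ε ≤ ((j' : ℕ) : ℝ) * ε :=
          mul_le_mul_of_nonneg_right (by push_cast; linarith) hε.le
        simp only [Set.mem_Ico] at *
        nlinarith
      intro j j' hjj
      have hne : (j : ℕ) ≠ (j' : ℕ) := fun h => hjj (Fin.ext h)
      rcases hne.lt_or_gt with h | h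
      · exact Set.disjoint_left.mpr fun x hx hx' => haux j j' h x hx hx'
      · exact Set.disjoint_right.mpr fun x hx hx' => haux j' j h x hx hx'
    set A' : Fin (N + 1) → Set ℕ := Fin.cases {k | k < K} B with hA'
    have hA0 : A' 0 = {k | k < K} := rfl
    have hAsucc : ∀ j : Fin N, A' j.succ = B j := fun j => by
      rw [hA']; exact Fin.cases_succ _
    have hdisj' : ∀ i j : Fin (N + 1), i ≠ j → Disjoint (A' i) (A' j) := by
      have hzs : ∀ j : Fin N, Disjoint (A' 0) (A' j.succ) := by
        intro j
        rw [hA0, hAsucc]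
        exact Set.disjoint_left.mpr fun x hx hx' => absurd hx'.1 (not_le.mpr hx)
      intro i j hij
      induction i using Fin.cases with
      | zero =>
        induction j using Fin.cases with
        | zero => exact absurd rfl hij
        | succ j' => exact hzs j'
      | succ i' =>
        induction j using Fin.cases with
        | zero => exact (hzs i').symm
        | succ j' =>
          rw [hAsucc, hAsucc]
          exact hdisjB i' j' fun h => hij (by rw [h])
    have hcover : (⋃ i, A' i) = Set.univ := by
      ext k
      simp only [Set.mem_iUnion, Set.mem_univ, iff_true]
      rcases lt_or_ge k K with h | h
      · exact ⟨0, by rw [hA0]; exact h⟩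
      · obtain ⟨j, hj⟩ := hBmem k h
        exact ⟨j.succ, by rw [hAsucc]; exact hj⟩
    -- the candidate lower sum
    set cj : Fin N → ℝ := fun j => sInf (a α '' B j) with hcj
    have hx0mem : (∑ i, Ξs (A' i) * sInf (a α '' A' i)) ∈
        {x : ℝ | ∃ (k : ℕ) (A : Fin k → Set ℕ),
          (∀ i j, i ≠ j → Disjoint (A i) (A j)) ∧ (⋃ i, A i) = Set.univ ∧
          x = ∑ i, Ξs (A i) * sInf (a α '' A i)} :=
      ⟨N + 1, A', hdisj', hcover, rfl⟩
    have hx0eq : (∑ i, Ξs (A' i) * sInf (a α '' A' i)) = ∑ j : Fin N, Ξs (B j) * cj j := by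
      rw [Fin.sum_univ_succ, hA0, hsmall K, zero_mul, zero_add]
      refine Finset.sum_congr rfl fun j _ => by rw [hAsucc]
    -- the limit bound
    have htend : Filter.Tendsto (fun v : J => ∑ j : Fin N, nuA v.1 (B j) * cj j) ↑U
        (nhds (∑ j : Fin N, Ξs (B j) * cj j)) :=
      tendsto_finset_sum _ (fun j _ => (hlim (B j)).mul_const _)
    have hev : ∀ᶠ v : J in ↑U, b α - 2 * ε ≤ ∑ j : Fin N, nuA v.1 (B j) * cj j := by
      have hT := hUT (∅, ⟨ε, hε⟩, K, {α})
      filter_upwards [hT] with v hv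
      have havg := hv.2.2 α (Finset.mem_singleton_self α) hα
      have hvK := hv.2.1
      have hcard : (0:ℝ) < (v.1.card : ℝ) := by
        exact_mod_cast Finset.card_pos.mpr v.2
      -- split v into the pieces B j
      have hpart : v.1 = Finset.univ.biUnion (fun j : Fin N => v.1.filter (· ∈ B j)) := by
        ext x
        simp only [Finset.mem_biUnion, Finset.mem_univ, true_and, Finset.mem_filter]
        constructor
        · intro hx
          obtain ⟨j, hj⟩ := hBmem x (hvK x hx)
          exact ⟨j, hx, hj⟩
        · rintro ⟨j, hj, -⟩; exact hj
      have hpd : ((Finset.univ : Finset (Fin N)) : Set (Fin N)).PairwiseDisjoint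
          (fun j : Fin N => v.1.filter (· ∈ B j)) := by
        intro j _ j' _ hjj
        refine Finset.disjoint_left.mpr fun x hx hx' => ?_
        exact Set.disjoint_left.mp (hdisjB j j' hjj)
          (Finset.mem_filter.mp hx).2 (Finset.mem_filter.mp hx').2
      have hbucket : ∀ j : Fin N,
          ∑ k ∈ v.1.filter (· ∈ B j), (a α k - ε) ≤ ((v.1.filter (· ∈ B j)).card : ℝ) * cj j := by
        intro j
        have h := Finset.sum_le_card_nsmul (v.1.filter (· ∈ B j)) (fun k => a α k - ε) (cj j) ?_
        · rwa [nsmul_eq_mul] at h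
        · intro k hk
          show a α k - ε ≤ cj j
          have hkB : k ∈ B j := (Finset.mem_filter.mp hk).2
          have hlb : -C0 + (j : ℕ) * ε ≤ cj j := by
            refine le_csInf ⟨a α k, ⟨k, hkB, rfl⟩⟩ ?_
            rintro y ⟨x, hxB, rfl⟩
            exact hxB.2.1
          have hub : a α k < -C0 + ((j : ℕ) + 1) * ε := hkB.2.2
          have : ((j : ℕ) + 1 : ℝ) * ε = (j : ℕ) * ε + ε := by ring
          linarith
      have hsplit : ∑ k ∈ v.1, (a α k - ε) =
          ∑ j : Fin N, ∑ k ∈ v.1.filter (· ∈ B j), (a α k - ε) := by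
        conv_lhs => rw [hpart]
        exact Finset.sum_biUnion hpd
      have hnuAf : ∀ j : Fin N, nuA v.1 (B j) =
          ((v.1.filter (· ∈ B j)).card : ℝ) / v.1.card := fun j => nuA_filter v.1 (B j)
      have hgsum : ∑ j : Fin N, nuA v.1 (B j) * cj j =
          (∑ j : Fin N, ((v.1.filter (· ∈ B j)).card : ℝ) * cj j) / v.1.card := by
        rw [Finset.sum_div]
        refine Finset.sum_congr rfl fun j _ => by rw [hnuAf j]; ring
      have hlow : ∑ k ∈ v.1, (a α k - ε) ≤
          ∑ j : Fin N, ((v.1.filter (· ∈ B j)).card : ℝ) * cj j := by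
        rw [hsplit]
        exact Finset.sum_le_sum fun j _ => hbucket j
      have hsub : ∑ k ∈ v.1, (a α k - ε) = (∑ k ∈ v.1, a α k) - v.1.card * ε := by
        rw [Finset.sum_sub_distrib, Finset.sum_const, nsmul_eq_mul]
      rw [hgsum, le_div_iff₀ hcard]
      have havg' : (b α - ε) * (v.1.card : ℝ) < ∑ k ∈ v.1, a α k :=
        (lt_div_iff₀ hcard).mp havg
      calc (b α - 2 * ε) * (v.1.card : ℝ)
          = (b α - ε) * v.1.card - v.1.card * ε := by ring
        _ ≤ (∑ k ∈ v.1, a α k) - v.1.card * ε := by linarith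
        _ = ∑ k ∈ v.1, (a α k - ε) := hsub.symm
        _ ≤ ∑ j : Fin N, ((v.1.filter (· ∈ B j)).card : ℝ) * cj j := hlow
    have hge : b α - 2 * ε ≤ ∑ j : Fin N, Ξs (B j) * cj j := ge_of_tendsto htend hev
    have hle2 := le_csSup hBdd hx0mem
    rw [Av]
    rw [hx0eq] at hle2
    linarith
  refine le_of_forall_pos_le_add fun ε hε => ?_
  have := hmain (ε / 2) (by linarith)
  linarith
end

section
/- Let χ, g, E_ξ be as above with every B ∈ [μ]^{<λ} having χ preimages under g. Fix ξ < μ, an ordinal α = χ + δ with δ < ξ (so χ ≤ α < χ + μ), and a countable B ⊆ α. Then there is a bijection f : χ → χ such that: f restricted to (E_ξ ∩ B ∩ χ) is the identity; f maps B ∩ χ into E_ξ; and for all γ < χ and β ≤ δ, γ ∈ E_β iff f(γ) ∈ E_β. -/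
universe u

/-- The combinatorial core of Lemma 2.7: with `g : χ → [μ]^{<λ}` realizing every
`B ∈ [μ]^{<λ}` with `χ` preimages and `E_ξ = {γ < χ : ξ ∉ g(γ)}`, for every `ξ < μ`,
`δ < ξ` (writing `α = χ + δ`), and every countable `B ⊆ α` (whose part below `χ` is
`Bc`), there is a bijection `f : χ → χ` which is the identity on `E_ξ ∩ Bc`, maps `Bc`
into `E_ξ`, and preserves every relation `E_β` for `β ≤ δ`. -/
theorem stmt16 (mu lam : Cardinal.{u}) (I : Type u) (hI : Cardinal.aleph0 < Cardinal.mk I)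
    (g : I → Set Ordinal.{u})
    (hg : ∀ i : I, (∀ x ∈ g i, x < mu.ord) ∧
        Cardinal.mk (g i) < Cardinal.lift.{u + 1} lam)
    (hreal : ∀ B : Set Ordinal.{u}, (∀ x ∈ B, x < mu.ord) →
        Cardinal.mk B < Cardinal.lift.{u + 1} lam →
        Cardinal.mk {i : I | g i = B} = Cardinal.mk I)
    (ξ δ : Ordinal.{u}) (hξ : ξ < mu.ord) (hδ : δ < ξ)
    (Bc : Set I) (hBc : Bc.Countable) :
    ∃ f : I ≃ I,
      (∀ i ∈ Bc, ξ ∉ g i → f i = i) ∧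
      (∀ i ∈ Bc, ξ ∉ g (f i)) ∧
      (∀ i : I, ∀ β ≤ δ, (β ∉ g i ↔ β ∉ g (f i))) := by
  classical
  haveI hne : Nonempty I :=
    Cardinal.mk_ne_zero_iff.mp (Cardinal.aleph0_pos.trans hI).ne'
  haveI := hBc.to_subtype
  obtain ⟨e, he⟩ := Countable.exists_injective_nat Bc
  set W : Set Ordinal.{u} → Set I := fun B => {j | g j = B} \ Bc with hWdef
  have hWinf : ∀ i : I, (W (g i \ {ξ})).Infinite := by
    intro i
    rw [← Set.infinite_coe_iff, Cardinal.infinite_iff]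
    by_contra hlt
    push_neg at hlt
    have hfull : Cardinal.mk {j : I | g j = g i \ {ξ}} = Cardinal.mk I := by
      apply hreal
      · intro x hx; exact (hg i).1 x hx.1
      · exact lt_of_le_of_lt (Cardinal.mk_le_mk_of_subset Set.diff_subset) (hg i).2
    have hsub : {j : I | g j = g i \ {ξ}} ⊆ W (g i \ {ξ}) ∪ Bc := by
      intro j hj
      by_cases hjB : j ∈ Bc
      · exact Or.inr hjB
      · exact Or.inl ⟨hj, hjB⟩
    have hle : Cardinal.mk {j : I | g j = g i \ {ξ}} ≤ Cardinal.aleph0 := by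
      calc Cardinal.mk {j : I | g j = g i \ {ξ}}
          ≤ Cardinal.mk ((W (g i \ {ξ}) ∪ Bc : Set I)) := Cardinal.mk_le_mk_of_subset hsub
        _ ≤ Cardinal.mk (W (g i \ {ξ})) + Cardinal.mk Bc := Cardinal.mk_union_le _ _
        _ ≤ Cardinal.aleph0 + Cardinal.aleph0 :=
            add_le_add hlt.le (Cardinal.mk_le_aleph0_iff.mpr hBc.to_subtype)
        _ = Cardinal.aleph0 := Cardinal.aleph0_add_aleph0
    rw [hfull] at hle
    exact absurd hle (not_le_of_gt hI)
  -- the "fresh element" picker, depending only on the target set B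
  set F : Set Ordinal.{u} → ℕ → I := fun B n =>
    if h : (W B).Infinite then ((Set.Infinite.natEmbedding (W B) h n : I)) else
      Classical.arbitrary I with hFdef
  have hFmem : ∀ B, (W B).Infinite → ∀ n, F B n ∈ W B := by
    intro B hB n
    simp only [hFdef, dif_pos hB]
    exact ((Set.Infinite.natEmbedding (W B) hB) n).2
  have hFinj : ∀ B, (W B).Infinite → ∀ n m, F B n = F B m → n = m := by
    intro B hB n m hnm
    simp only [hFdef, dif_pos hB] at hnm
    exact (Set.Infinite.natEmbedding (W B) hB).injective (Subtype.coe_injective hnm)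
  set H : I → I := fun i =>
    if hi : i ∈ Bc then F (g i \ {ξ}) (e ⟨i, hi⟩) else i with hHdef
  set S : Set I := {i | i ∈ Bc ∧ ξ ∈ g i} with hSdef
  have hHmem : ∀ i ∈ Bc, H i ∈ W (g i \ {ξ}) := by
    intro i hi
    simp only [hHdef, dif_pos hi]
    exact hFmem _ (hWinf i) _
  have hHg : ∀ i ∈ Bc, g (H i) = g i \ {ξ} := fun i hi => (hHmem i hi).1
  have hHnB : ∀ i ∈ Bc, H i ∉ Bc := fun i hi => (hHmem i hi).2
  have hHinj : ∀ i ∈ Bc, ∀ j ∈ Bc, ξ ∈ g i → ξ ∈ g j → H i = H j → i = j := by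
    intro i hi j hj hξi hξj hij
    have hBeq : g i \ {ξ} = g j \ {ξ} := by
      rw [← hHg i hi, ← hHg j hj, hij]
    simp only [hHdef, dif_pos hi, dif_pos hj] at hij
    rw [← hBeq] at hij
    have h5 := he (hFinj _ (hWinf i) _ _ hij)
    exact congrArg Subtype.val h5
  -- the permutation
  set f : I → I := fun i =>
    if i ∈ S then H i
    else if h : ∃ s, s ∈ S ∧ H s = i then Classical.choose h else i with hfdef
  have hfS : ∀ i ∈ S, f i = H i := by
    intro i hi; simp only [hfdef, if_pos hi]
  have hHnS : ∀ i ∈ S, H i ∉ S := fun i hi hmem => hHnB i hi.1 hmem.1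
  have hfid : ∀ i, i ∉ S → (¬ ∃ s, s ∈ S ∧ H s = i) → f i = i := by
    intro i h1 h2; simp only [hfdef, if_neg h1, dif_neg h2]
  have hfinv : Function.Involutive f := by
    intro i
    by_cases hiS : i ∈ S
    · rw [hfS i hiS]
      have h2 : ∃ s, s ∈ S ∧ H s = H i := ⟨i, hiS, rfl⟩
      simp only [hfdef, if_neg (hHnS i hiS), dif_pos h2]
      obtain ⟨hs, hHs⟩ := Classical.choose_spec h2
      exact hHinj _ hs.1 _ hiS.1 hs.2 hiS.2 hHs
    · by_cases hex : ∃ s, s ∈ S ∧ H s = i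
      · have hfi : f i = Classical.choose hex := by
          simp only [hfdef, if_neg hiS, dif_pos hex]
        obtain ⟨hs, hHs⟩ := Classical.choose_spec hex
        rw [hfi, hfS _ hs, hHs]
      · rw [hfid i hiS hex, hfid i hiS hex]
  refine ⟨Function.Involutive.toPerm f hfinv, ?_, ?_, ?_⟩
  · -- identity on E_ξ ∩ Bc
    intro i hi hξi
    have h1 : i ∉ S := fun hmem => hξi hmem.2
    have h2 : ¬ ∃ s, s ∈ S ∧ H s = i := by
      rintro ⟨s, hs, hHs⟩
      exact hHnB s hs.1 (hHs ▸ hi)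
    exact hfid i h1 h2
  · -- maps Bc into E_ξ
    intro i hi
    by_cases hξi : ξ ∈ g i
    · have hiS : i ∈ S := ⟨hi, hξi⟩
      show ξ ∉ g (f i)
      rw [hfS i hiS, hHg i hi]
      simp
    · have h1 : i ∉ S := fun hmem => hξi hmem.2
      have h2 : ¬ ∃ s, s ∈ S ∧ H s = i := by
        rintro ⟨s, hs, hHs⟩
        exact hHnB s hs.1 (hHs ▸ hi)
      show ξ ∉ g (f i)
      rw [hfid i h1 h2]
      exact hξi
  · -- preserves E_β for β ≤ δ
    intro i β hβ
    have hβξ : β ≠ ξ := ne_of_lt (lt_of_le_of_lt hβ hδ)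
    show β ∉ g i ↔ β ∉ g (f i)
    by_cases hiS : i ∈ S
    · rw [hfS i hiS, hHg i hiS.1]
      simp [Set.mem_diff, hβξ]
    · by_cases hex : ∃ s, s ∈ S ∧ H s = i
      · have hfi : f i = Classical.choose hex := by
          simp only [hfdef, if_neg hiS, dif_pos hex]
        obtain ⟨hs, hHs⟩ := Classical.choose_spec hex
        have hgi := hHg _ hs.1
        rw [hHs] at hgi
        rw [hfi, hgi]
        simp [Set.mem_diff, hβξ]
      · rw [hfid i hiS hex]
end
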